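/- arXiv:2308.04437 — 9 statements merged into one kernel-verified Lean document; each statement's English description precedes it below -/
import Mathlib

section
/- For integers i ≥ 1, the sum ∑_{j=1}^{i} (-1)^j · 2^{2j-1} · ((2i-1)/(2j-1)) · C(i+j-2, 2j-2) equals (-1)^i · 2. -/
open Finset

private lemma natIdentM (t m : ℕ) :
    (2*t+2*m+3) * Nat.choose (2*t+m+2) (2*t+2) + (2*t+2*m+1) * Nat.choose (2*t+m+1) (2*t+2)
      = (2*t+3) * (4 * Nat.choose (2*t+m+2) (2*t+3) + Nat.choose (2*t+m+1) (2*t+1)) := by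
  have e1 : Nat.choose (2*t+m+1) (2*t+2) * (2*t+2)
      = Nat.choose (2*t+m+1) (2*t+1) * m := by
    have h := Nat.choose_succ_right_eq (2*t+m+1) (2*t+1)
    rw [show 2*t+1+1 = 2*t+2 by omega, show 2*t+m+1 - (2*t+1) = m by omega] at h
    exact h
  have e2 : Nat.choose (2*t+m+2) (2*t+2)
      = Nat.choose (2*t+m+1) (2*t+1) + Nat.choose (2*t+m+1) (2*t+2) := by
    have h := Nat.choose_succ_succ (2*t+m+1) (2*t+1)
    simp only [Nat.succ_eq_add_one] at h
    rw [show 2*t+m+1+1 = 2*t+m+2 by omega, show 2*t+1+1 = 2*t+2 by omega] at h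
    exact h
  have e3 : Nat.choose (2*t+m+2) (2*t+3) * (2*t+3)
      = Nat.choose (2*t+m+2) (2*t+2) * m := by
    have h := Nat.choose_succ_right_eq (2*t+m+2) (2*t+2)
    rw [show 2*t+2+1 = 2*t+3 by omega, show 2*t+m+2 - (2*t+2) = m by omega] at h
    exact h
  zify at e1 e2 e3 ⊢
  linear_combination 2*e1 + (2*(t:ℤ) - 2*m + 3)*e2 - 4*e3

private lemma natIdent (n t : ℕ) :
    (2*n+3) * Nat.choose (n+t+2) (2*t+2) + (2*n+1) * Nat.choose (n+t+1) (2*t+2)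
      = (2*t+3) * (4 * Nat.choose (n+t+2) (2*t+3) + Nat.choose (n+t+1) (2*t+1)) := by
  rcases le_or_gt t n with h | h
  · obtain ⟨m, rfl⟩ := Nat.exists_eq_add_of_le h
    have := natIdentM t m
    rw [show t+m+t+2 = 2*t+m+2 by omega, show t+m+t+1 = 2*t+m+1 by omega]
    rw [show 2*(t+m)+3 = 2*t+2*m+3 by omega, show 2*(t+m)+1 = 2*t+2*m+1 by omega]
    exact this
  · rw [Nat.choose_eq_zero_of_lt (by omega), Nat.choose_eq_zero_of_lt (by omega),
      Nat.choose_eq_zero_of_lt (by omega), Nat.choose_eq_zero_of_lt (by omega)]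
    simp

private def Aa (n k : ℕ) : ℚ :=
  (-1)^(k+1) * 2^(2*k+1) * ((2*n+1 : ℕ) : ℚ) / ((2*k+1 : ℕ) : ℚ) * (Nat.choose (n+k) (2*k) : ℚ)

private def Hh (n : ℕ) : ℕ → ℚ
  | 0 => 0
  | (k+1) => 2 * (-1)^(k+1) * 2^(2*k+2) * (Nat.choose (n+k+1) (2*k+1) : ℚ)

private lemma key (n k : ℕ) : Aa (n+1) k + Aa n k = Hh n (k+1) - Hh n k := by
  cases k with
  | zero =>
      simp [Aa, Hh, Nat.choose_one_right]
      ring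
  | succ t =>
      have h := natIdent n t
      have h' : ((2*n+3) * Nat.choose (n+t+2) (2*t+2) + (2*n+1) * Nat.choose (n+t+1) (2*t+2)
          : ℚ) = (2*t+3) * (4 * Nat.choose (n+t+2) (2*t+3) + Nat.choose (n+t+1) (2*t+1)) := by
        exact_mod_cast congrArg (Nat.cast : ℕ → ℚ) h
      simp only [Aa, Hh]
      rw [show n+1+(t+1) = n+t+2 by omega, show n+(t+1) = n+t+1 by omega,
        show 2*(t+1) = 2*t+2 by omega, show n+t+1+1 = n+t+2 by omega,
        show 2*t+2+1 = 2*t+3 by omega, show 2*t+2+2 = 2*t+4 by omega]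
      have hq : ((2*t+3 : ℕ) : ℚ) ≠ 0 := by positivity
      field_simp
      push_cast at h' ⊢
      linear_combination ((-1:ℚ))^t * 2^(2*t+3) * h'

private lemma Ssum_rec (n : ℕ) :
    ∑ k ∈ range (n+2), Aa (n+1) k = - ∑ k ∈ range (n+1), Aa n k := by
  rw [Finset.sum_range_succ]
  have tele : ∑ k ∈ range (n+1), (Hh n (k+1) - Hh n k) = Hh n (n+1) - Hh n 0 :=
    Finset.sum_range_sub (Hh n) (n+1)
  have hsum : ∑ k ∈ range (n+1), Aa (n+1) k
      = (Hh n (n+1) - Hh n 0) - ∑ k ∈ range (n+1), Aa n k := by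
    rw [← tele, ← Finset.sum_sub_distrib]
    apply Finset.sum_congr rfl
    intro k _
    linarith [key n k]
  rw [hsum]
  simp only [Hh, Aa]
  rw [show n+n+1 = 2*n+1 by omega, Nat.choose_self,
    show n+1+(n+1) = 2*(n+1) by omega, Nat.choose_self]
  have : ((2*(n+1)+1 : ℕ) : ℚ) ≠ 0 := by positivity
  field_simp
  ring

private lemma Ssum_eq (n : ℕ) : ∑ k ∈ range (n+1), Aa n k = (-1)^(n+1) * 2 := by
  induction n with
  | zero => simp [Aa]
  | succ m ih =>
      rw [Ssum_rec m, ih]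
      ring

theorem stmt_1 (i : ℕ) (hi : 1 ≤ i) :
    ∑ j ∈ Finset.Icc 1 i,
      (-1 : ℚ) ^ j * (2 : ℚ) ^ (2 * j - 1) * ((2 * i - 1 : ℕ) : ℚ) / ((2 * j - 1 : ℕ) : ℚ) *
        (Nat.choose (i + j - 2) (2 * j - 2))
    = (-1 : ℚ) ^ i * 2 := by
  obtain ⟨n, rfl⟩ := Nat.exists_eq_add_of_le hi
  rw [← Finset.Ico_add_one_right_eq_Icc, Finset.sum_Ico_eq_sum_range]
  rw [show 1+n+1-1 = n+1 by omega]
  rw [show (-1:ℚ)^(1+n) = (-1)^(n+1) by ring]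
  rw [← Ssum_eq n]
  apply Finset.sum_congr rfl
  intro k _
  simp only [Aa]
  rw [show 2*(1+k)-1 = 2*k+1 by omega, show 2*(1+n)-1 = 2*n+1 by omega,
    show 1+n+(1+k)-2 = n+k by omega, show 2*(1+k)-2 = 2*k by omega]
  rw [show (-1:ℚ)^(1+k) = (-1)^(k+1) by ring]
end

section
/- For integers i ≥ j ≥ 2, the sum ∑_{k=1}^{i} (-1)^k · 2^{2k} · ((2i-1)/(2k-1)) · C(i+k-2, 2k-2) · C(k, j-1) equals (-1)^i · 2^{2j-2} · ((2i²-2i+j-1)/((2j-3)(j-1))) · C(i+j-3, i-j+1). -/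
open Finset Nat



def Aq (i k : ℕ) : ℚ :=
  (-1 : ℚ) ^ k * (2 : ℚ) ^ (2 * k) * ((2 * i - 1 : ℕ) : ℚ) / ((2 * k - 1 : ℕ) : ℚ) *
    (Nat.choose (i + k - 2) (2 * k - 2))

def Sq (i j : ℕ) : ℚ := ∑ k ∈ Finset.Icc 1 i, Aq i k * (Nat.choose k (j - 1) : ℚ)

lemma Aq_zero_right (i : ℕ) : Aq i 0 = 0 := by simp [Aq]

lemma Aq_eq_zero {i k : ℕ} (h : i < k) : Aq i k = 0 := by
  rcases Nat.lt_or_ge k 2 with hk | hk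
  · interval_cases k
    · simp [Aq]
    · interval_cases i
      simp [Aq]
  · have h2 : i + k - 2 < 2 * k - 2 := by omega
    simp [Aq, Nat.choose_eq_zero_of_lt h2]

lemma Aform (p q : ℕ) :
    Aq (p + 1) (q + 1) =
      (-1 : ℚ) ^ (q + 1) * 2 ^ (2 * q + 2) * (2 * (p : ℚ) + 1) / (2 * (q : ℚ) + 1) *
        (Nat.choose (p + q) (2 * q)) := by
  unfold Aq
  rw [show 2 * (p + 1) - 1 = 2 * p + 1 from by omega,
      show 2 * (q + 1) - 1 = 2 * q + 1 from by omega,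
      show p + 1 + (q + 1) - 2 = p + q from by omega,
      show 2 * (q + 1) - 2 = 2 * q from by omega,
      show 2 * (q + 1) = 2 * q + 2 from by omega]
  push_cast
  ring


lemma factcast (n : ℕ) : ((n+1)! : ℚ) = ((n:ℚ)+1) * (n ! : ℚ) := by
  rw [Nat.factorial_succ]; push_cast; ring

lemma chooseKey (p r : ℕ) :
    ((2*r+1)*(2*p+5) : ℚ) * ((p+r+3).choose (2*r+2))
      - 2*((2*r+1)*(2*p+3)) * ((p+r+2).choose (2*r+2))
      + ((2*r+1)*(2*p+1)) * ((p+r+1).choose (2*r+2))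
      - ((2*r+3)*(2*p+3)) * ((p+r+1).choose (2*r)) = 0 := by
  rcases Nat.lt_or_ge p (r+1) with hp | hp
  · -- p ≤ r
    rcases Nat.lt_or_ge p r with hp2 | hp2
    · rcases Nat.lt_or_ge (p+1) r with hp3 | hp3
      · -- p + 2 ≤ r : everything vanishes
        rw [Nat.choose_eq_zero_of_lt (by omega), Nat.choose_eq_zero_of_lt (by omega),
            Nat.choose_eq_zero_of_lt (by omega), Nat.choose_eq_zero_of_lt (by omega)]
        push_cast; ring
      · -- p + 1 = r
        have hr : r = p + 1 := by omega
        subst hr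
        rw [show p+(p+1)+3 = 2*(p+1)+2 from by ring, Nat.choose_self,
            Nat.choose_eq_zero_of_lt (by omega), Nat.choose_eq_zero_of_lt (by omega),
            show p+(p+1)+1 = 2*(p+1) from by ring, Nat.choose_self]
        push_cast; ring
    · -- p = r
      have hr : r = p := by omega
      subst hr
      rw [show r+r+3 = 2*r+2+1 from by ring,
          Nat.choose_succ_self_right,
          show r+r+2 = 2*r+2 from by ring, Nat.choose_self,
          Nat.choose_eq_zero_of_lt (by omega),
          show r+r+1 = 2*r+1 from by ring,
          Nat.choose_succ_self_right]
      push_cast; ring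
  · -- r + 1 ≤ p
    obtain ⟨s, rfl⟩ : ∃ s, p = r + 1 + s := ⟨p - (r+1), by omega⟩
    rw [show r+1+s+r+3 = 2*r+s+4 from by ring, show r+1+s+r+2 = 2*r+s+3 from by ring,
        show r+1+s+r+1 = 2*r+s+2 from by ring]
    rw [Nat.cast_choose ℚ (show 2*r+2 ≤ 2*r+s+4 by omega),
        Nat.cast_choose ℚ (show 2*r+2 ≤ 2*r+s+3 by omega),
        Nat.cast_choose ℚ (show 2*r+2 ≤ 2*r+s+2 by omega),
        Nat.cast_choose ℚ (show 2*r ≤ 2*r+s+2 by omega)]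
    rw [show 2*r+s+4 - (2*r+2) = s+2 from by omega,
        show 2*r+s+3 - (2*r+2) = s+1 from by omega,
        show 2*r+s+2 - (2*r+2) = s from by omega,
        show 2*r+s+2 - 2*r = s+2 from by omega]
    have e1 : ((2*r+s+4)! : ℚ) = (2*(r:ℚ)+(s:ℚ)+4) * ((2*(r:ℚ)+(s:ℚ)+3)) * ((2*r+s+2)! : ℚ) := by
      rw [show 2*r+s+4 = (2*r+s+3)+1 from by ring, factcast,
          show 2*r+s+3 = (2*r+s+2)+1 from by ring, factcast]
      push_cast; ring
    have e2 : ((2*r+s+3)! : ℚ) = ((2*(r:ℚ)+(s:ℚ)+3)) * ((2*r+s+2)! : ℚ) := by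
      rw [show 2*r+s+3 = (2*r+s+2)+1 from by ring, factcast]
      push_cast; ring
    have e3 : ((2*r+2)! : ℚ) = (2*(r:ℚ)+2) * (2*(r:ℚ)+1) * ((2*r)! : ℚ) := by
      rw [show 2*r+2 = (2*r+1)+1 from by ring, factcast,
          show 2*r+1 = (2*r)+1 from by ring, factcast]
      push_cast; ring
    have e4 : ((s+2)! : ℚ) = ((s:ℚ)+2) * ((s:ℚ)+1) * (s ! : ℚ) := by
      rw [show s+2 = (s+1)+1 from by ring, factcast, factcast]
      push_cast; ring
    have e5 : ((s+1)! : ℚ) = ((s:ℚ)+1) * (s ! : ℚ) := by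
      rw [factcast]
    rw [e1, e2, e3, e4, e5]
    have hF : ((2*r+s+2)! : ℚ) ≠ 0 := by exact_mod_cast (Nat.factorial_pos _).ne'
    have hG : ((s)! : ℚ) ≠ 0 := by exact_mod_cast (Nat.factorial_pos _).ne'
    have hH : ((2*r)! : ℚ) ≠ 0 := by exact_mod_cast (Nat.factorial_pos _).ne'
    have h1 : ((s:ℚ)+2) ≠ 0 := by positivity
    have h2 : ((s:ℚ)+1) ≠ 0 := by positivity
    have h3 : (2*(r:ℚ)+2) ≠ 0 := by positivity
    have h4 : (2*(r:ℚ)+1) ≠ 0 := by positivity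
    field_simp
    push_cast
    ring

lemma keyA (p k : ℕ) (hk : 1 ≤ k) :
    Aq (p+3) k = 2 * Aq (p+2) k - Aq (p+1) k - 4 * Aq (p+2) (k-1) := by
  obtain ⟨q, rfl⟩ : ∃ q, k = q + 1 := ⟨k - 1, by omega⟩
  rcases Nat.eq_zero_or_pos q with rfl | hq
  · simp only [Nat.add_sub_cancel, Aq_zero_right, mul_zero, sub_zero]
    have h3 := Aform (p+2) 0
    have h2 := Aform (p+1) 0
    have h1 := Aform p 0
    rw [show p+2+1 = p+3 from by ring] at h3
    rw [show p+1+1 = p+2 from by ring] at h2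
    rw [h1, h2, h3]
    simp only [mul_zero, add_zero, Nat.choose_zero_right]
    push_cast
    field_simp
    ring
  · obtain ⟨r, rfl⟩ : ∃ r, q = r + 1 := ⟨q - 1, by omega⟩
    have m3 : (2*(r:ℚ)+3) * Aq (p+3) (r+1+1) =
        (-1:ℚ)^r * 2^(2*r+4) * (2*(p:ℚ)+5) * ((p+r+3).choose (2*r+2)) := by
      have h := Aform (p+2) (r+1)
      rw [show p+2+1 = p+3 from by ring, show p+2+(r+1) = p+r+3 from by ring,
          show 2*(r+1) = 2*r+2 from by ring] at h
      rw [h]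
      have d : (2*((r:ℚ)+1)+1) ≠ 0 := by positivity
      push_cast
      field_simp
      ring
    have m2 : (2*(r:ℚ)+3) * Aq (p+2) (r+1+1) =
        (-1:ℚ)^r * 2^(2*r+4) * (2*(p:ℚ)+3) * ((p+r+2).choose (2*r+2)) := by
      have h := Aform (p+1) (r+1)
      rw [show p+1+1 = p+2 from by ring, show p+1+(r+1) = p+r+2 from by ring,
          show 2*(r+1) = 2*r+2 from by ring] at h
      rw [h]
      have d : (2*((r:ℚ)+1)+1) ≠ 0 := by positivity
      push_cast
      field_simp
      ring
    have m1 : (2*(r:ℚ)+3) * Aq (p+1) (r+1+1) =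
        (-1:ℚ)^r * 2^(2*r+4) * (2*(p:ℚ)+1) * ((p+r+1).choose (2*r+2)) := by
      have h := Aform p (r+1)
      rw [show p+(r+1) = p+r+1 from by ring, show 2*(r+1) = 2*r+2 from by ring] at h
      rw [h]
      have d : (2*((r:ℚ)+1)+1) ≠ 0 := by positivity
      push_cast
      field_simp
      ring
    have m0 : (2*(r:ℚ)+1) * Aq (p+2) (r+1+1-1) =
        -((-1:ℚ)^r) * 2^(2*r+2) * (2*(p:ℚ)+3) * ((p+r+1).choose (2*r)) := by
      rw [show r+1+1-1 = r+1 from by omega]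
      have h := Aform (p+1) r
      rw [show p+1+1 = p+2 from by ring, show p+1+r = p+r+1 from by ring] at h
      rw [h]
      have d : (2*(r:ℚ)+1) ≠ 0 := by positivity
      push_cast
      field_simp
      ring
    have key := chooseKey p r
    push_cast at key
    have hd : ((2*(r:ℚ)+3) * (2*(r:ℚ)+1)) ≠ 0 := by positivity
    apply mul_left_cancel₀ hd
    linear_combination (2*(r:ℚ)+1) * m3 - 2*(2*(r:ℚ)+1) * m2 + (2*(r:ℚ)+1) * m1
      + 4*(2*(r:ℚ)+3) * m0 + ((-1:ℚ)^r * 2^(2*r+4)) * key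

lemma Sq_ext (i j M : ℕ) (h : i ≤ M) :
    ∑ k ∈ Finset.Icc 1 M, Aq i k * (Nat.choose k (j - 1) : ℚ) = Sq i j := by
  rw [Sq]
  symm
  apply Finset.sum_subset (Finset.Icc_subset_Icc le_rfl h)
  intro x hx hnx
  rw [Aq_eq_zero (show i < x by simp [Finset.mem_Icc] at hx hnx ⊢; omega)]
  ring

lemma shift_sum (p m : ℕ) (f : ℕ → ℚ) :
    ∑ k ∈ Finset.Icc 1 (p+3), Aq (p+2) (k-1) * f k
      = ∑ k ∈ Finset.Icc 1 (p+2), Aq (p+2) k * f (k+1) := by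
  rw [show Finset.Icc 1 (p+3) = (Finset.Icc 0 (p+2)).map (addRightEmbedding 1) from by
        rw [Finset.map_add_right_Icc]]
  rw [Finset.sum_map]
  simp only [addRightEmbedding_apply, Nat.add_sub_cancel]
  symm
  apply Finset.sum_subset (Finset.Icc_subset_Icc (by omega) le_rfl)
  intro x hx hnx
  have : x = 0 := by simp [Finset.mem_Icc] at hx hnx ⊢; omega
  subst this
  rw [Aq_zero_right]; ring

lemma Srec (p j : ℕ) (hj : 2 ≤ j) :
    Sq (p+3) j = -2 * Sq (p+2) j - Sq (p+1) j - 4 * Sq (p+2) (j-1) := by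
  obtain ⟨m, rfl⟩ : ∃ m, j = m + 2 := ⟨j - 2, by omega⟩
  have expand : Sq (p+3) (m+2)
      = ∑ k ∈ Finset.Icc 1 (p+3),
          (2 * Aq (p+2) k - Aq (p+1) k - 4 * Aq (p+2) (k-1)) * (Nat.choose k (m+1) : ℚ) := by
    rw [Sq, show m+2-1 = m+1 from by omega]
    apply Finset.sum_congr rfl
    intro k hk
    rw [keyA p k (by simp [Finset.mem_Icc] at hk; omega)]
  rw [expand]
  simp only [sub_mul, mul_assoc]
  rw [Finset.sum_sub_distrib, Finset.sum_sub_distrib, ← Finset.mul_sum, ← Finset.mul_sum]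
  have e1 : ∑ k ∈ Finset.Icc 1 (p+3), Aq (p+2) k * (Nat.choose k (m+1) : ℚ) = Sq (p+2) (m+2) :=
    Sq_ext (p+2) (m+2) (p+3) (by omega)
  have e2 : ∑ k ∈ Finset.Icc 1 (p+3), Aq (p+1) k * (Nat.choose k (m+1) : ℚ) = Sq (p+1) (m+2) :=
    Sq_ext (p+1) (m+2) (p+3) (by omega)
  have e3 : ∑ k ∈ Finset.Icc 1 (p+3), Aq (p+2) (k-1) * (Nat.choose k (m+1) : ℚ)
      = Sq (p+2) (m+2) + Sq (p+2) (m+1) := by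
    rw [shift_sum p m (fun k => (Nat.choose k (m+1) : ℚ))]
    have : ∀ k, (Nat.choose (k+1) (m+1) : ℚ) = (Nat.choose k (m+1) : ℚ) + (Nat.choose k m : ℚ) := by
      intro k
      rw [Nat.choose_succ_succ']
      push_cast
      ring
    calc ∑ k ∈ Finset.Icc 1 (p+2), Aq (p+2) k * (Nat.choose (k+1) (m+1) : ℚ)
        = ∑ k ∈ Finset.Icc 1 (p+2),
            (Aq (p+2) k * (Nat.choose k (m+1) : ℚ) + Aq (p+2) k * (Nat.choose k m : ℚ)) := by
          apply Finset.sum_congr rfl; intro k _; rw [this k]; ring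
      _ = Sq (p+2) (m+2) + Sq (p+2) (m+1) := by
          rw [Finset.sum_add_distrib, Sq, Sq]
          norm_num
  rw [e1, e2, e3, show m+2-1 = m+1 from by omega]
  ring

lemma Srec1 (p : ℕ) :
    Sq (p+3) 1 = -2 * Sq (p+2) 1 - Sq (p+1) 1 := by
  have expand : Sq (p+3) 1
      = ∑ k ∈ Finset.Icc 1 (p+3),
          (2 * Aq (p+2) k - Aq (p+1) k - 4 * Aq (p+2) (k-1)) * (Nat.choose k 0 : ℚ) := by
    rw [Sq]
    apply Finset.sum_congr rfl
    intro k hk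
    rw [keyA p k (by simp [Finset.mem_Icc] at hk; omega)]
  rw [expand]
  simp only [sub_mul, mul_assoc]
  rw [Finset.sum_sub_distrib, Finset.sum_sub_distrib, ← Finset.mul_sum, ← Finset.mul_sum]
  have e1 : ∑ k ∈ Finset.Icc 1 (p+3), Aq (p+2) k * (Nat.choose k 0 : ℚ) = Sq (p+2) 1 :=
    Sq_ext (p+2) 1 (p+3) (by omega)
  have e2 : ∑ k ∈ Finset.Icc 1 (p+3), Aq (p+1) k * (Nat.choose k 0 : ℚ) = Sq (p+1) 1 :=
    Sq_ext (p+1) 1 (p+3) (by omega)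
  have e3 : ∑ k ∈ Finset.Icc 1 (p+3), Aq (p+2) (k-1) * (Nat.choose k 0 : ℚ) = Sq (p+2) 1 := by
    rw [shift_sum p 0 (fun k => (Nat.choose k 0 : ℚ))]
    simp only [Nat.choose_zero_right]
    rw [Sq]
    simp
  rw [e1, e2, e3]
  ring

lemma Sq11 : Sq 1 1 = -4 := by
  rw [Sq, show Finset.Icc 1 1 = {1} from rfl, Finset.sum_singleton]
  norm_num [Aq]

lemma Sq21 : Sq 2 1 = 4 := by
  rw [Sq, show Finset.Icc 1 2 = {1, 2} from rfl]
  rw [Finset.sum_insert (by decide), Finset.sum_singleton]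
  norm_num [Aq]

lemma Scol1 : ∀ p : ℕ, Sq (p+1) 1 = 4 * (-1 : ℚ)^(p+1) := by
  have H : ∀ p : ℕ, Sq (p+1) 1 = 4 * (-1 : ℚ)^(p+1) ∧ Sq (p+2) 1 = 4 * (-1 : ℚ)^(p+2) := by
    intro p
    induction p with
    | zero => exact ⟨by rw [Sq11]; norm_num, by rw [Sq21]; norm_num⟩
    | succ n ih =>
      refine ⟨ih.2, ?_⟩
      rw [show n+1+2 = n+3 from by ring, Srec1 n, ih.1, ih.2]
      ring
  exact fun p => (H p).1

lemma Stop (p : ℕ) : Sq (p+1) (p+2) = (-1 : ℚ)^(p+1) * 2^(2*p+2) := by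
  rw [Sq, show p+2-1 = p+1 from by omega]
  rw [Finset.sum_eq_single_of_mem (p+1) (by simp)]
  · rw [Aform p p, Nat.choose_self, show p+p = 2*p from by ring, Nat.choose_self]
    have : (2*(p:ℚ)+1) ≠ 0 := by positivity
    field_simp
    norm_num
  · intro k hk hne
    have : k < p + 1 := by simp [Finset.mem_Icc] at hk; omega
    rw [Nat.choose_eq_zero_of_lt this]
    norm_num

lemma Szero (i j : ℕ) (h : i + 2 ≤ j) : Sq i j = 0 := by
  rw [Sq]
  apply Finset.sum_eq_zero
  intro k hk
  rw [Nat.choose_eq_zero_of_lt (show k < j - 1 by simp [Finset.mem_Icc] at hk; omega)]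
  norm_num


def Rr (i j : ℕ) : ℚ :=
  (-1 : ℚ) ^ i * (2 : ℚ) ^ (2 * j - 2) *
    ((2 * (i : ℚ) ^ 2 - 2 * i + j - 1) / (((2 * (j : ℚ) - 3)) * ((j : ℚ) - 1))) *
    (Nat.choose (i + j - 3) (i - j + 1))


lemma Rr2 (m : ℕ) : Rr (m+2) 2 = (-1:ℚ)^m * 4 * (2*((m:ℚ)+2)^2 - 2*((m:ℚ)+2) + 1) := by
  rw [Rr, show m+2+2-3 = m+1 from by omega, show m+2-2+1 = m+1 from by omega,
      show 2*2-2 = 2 from by omega, Nat.choose_self]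
  push_cast
  norm_num
  ring

lemma Ralg (a b : ℕ) :
    Rr (a+b+5) (a+3) = -2 * Rr (a+b+4) (a+3) - Rr (a+b+3) (a+3) - 4 * Rr (a+b+4) (a+2) := by
  simp only [Rr]
  rw [show a+b+5 + (a+3) - 3 = 2*a+b+5 from by omega,
      show a+b+5 - (a+3) + 1 = b+3 from by omega,
      show a+b+4 + (a+3) - 3 = 2*a+b+4 from by omega,
      show a+b+4 - (a+3) + 1 = b+2 from by omega,
      show a+b+3 + (a+3) - 3 = 2*a+b+3 from by omega,
      show a+b+3 - (a+3) + 1 = b+1 from by omega,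
      show a+b+4 + (a+2) - 3 = 2*a+b+3 from by omega,
      show a+b+4 - (a+2) + 1 = b+3 from by omega,
      show 2*(a+3) - 2 = 2*a+4 from by omega,
      show 2*(a+2) - 2 = 2*a+2 from by omega]
  rw [Nat.cast_choose ℚ (show b+3 ≤ 2*a+b+5 by omega),
      Nat.cast_choose ℚ (show b+2 ≤ 2*a+b+4 by omega),
      Nat.cast_choose ℚ (show b+1 ≤ 2*a+b+3 by omega),
      Nat.cast_choose ℚ (show b+3 ≤ 2*a+b+3 by omega)]
  rw [show 2*a+b+5 - (b+3) = 2*a+2 from by omega,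
      show 2*a+b+4 - (b+2) = 2*a+2 from by omega,
      show 2*a+b+3 - (b+1) = 2*a+2 from by omega,
      show 2*a+b+3 - (b+3) = 2*a from by omega]
  have e1 : ((2*a+b+5)! : ℚ) = (2*(a:ℚ)+(b:ℚ)+5) * (2*(a:ℚ)+(b:ℚ)+4) * ((2*a+b+3)! : ℚ) := by
    rw [show 2*a+b+5 = (2*a+b+4)+1 from by ring, factcast,
        show 2*a+b+4 = (2*a+b+3)+1 from by ring, factcast]
    push_cast; ring
  have e2 : ((2*a+b+4)! : ℚ) = (2*(a:ℚ)+(b:ℚ)+4) * ((2*a+b+3)! : ℚ) := by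
    rw [show 2*a+b+4 = (2*a+b+3)+1 from by ring, factcast]
    push_cast; ring
  have e3 : ((b+3)! : ℚ) = ((b:ℚ)+3) * ((b:ℚ)+2) * ((b:ℚ)+1) * (b ! : ℚ) := by
    rw [show b+3 = (b+2)+1 from by ring, factcast, show b+2 = (b+1)+1 from by ring, factcast,
        factcast]
    push_cast; ring
  have e4 : ((b+2)! : ℚ) = ((b:ℚ)+2) * ((b:ℚ)+1) * (b ! : ℚ) := by
    rw [show b+2 = (b+1)+1 from by ring, factcast, factcast]
    push_cast; ring
  have e5 : ((b+1)! : ℚ) = ((b:ℚ)+1) * (b ! : ℚ) := by rw [factcast]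
  have e6 : ((2*a+2)! : ℚ) = (2*(a:ℚ)+2) * (2*(a:ℚ)+1) * ((2*a)! : ℚ) := by
    rw [show 2*a+2 = (2*a+1)+1 from by ring, factcast, show 2*a+1 = (2*a)+1 from rfl, factcast]
    push_cast; ring
  rw [e1, e2, e3, e4, e5, e6]
  have hF : ((2*a+b+3)! : ℚ) ≠ 0 := by exact_mod_cast (Nat.factorial_pos _).ne'
  have hG : ((b)! : ℚ) ≠ 0 := by exact_mod_cast (Nat.factorial_pos _).ne'
  have hH : ((2*a)! : ℚ) ≠ 0 := by exact_mod_cast (Nat.factorial_pos _).ne'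
  have h1 : ((b:ℚ)+1) ≠ 0 := by positivity
  have h2 : ((b:ℚ)+2) ≠ 0 := by positivity
  have h3 : ((b:ℚ)+3) ≠ 0 := by positivity
  have h4 : (2*(a:ℚ)+1) ≠ 0 := by positivity
  have h5 : (2*(a:ℚ)+2) ≠ 0 := by positivity
  push_cast
  rw [show 2*((a:ℚ)+3)-3 = 2*(a:ℚ)+3 from by ring,
      show (a:ℚ)+3-1 = (a:ℚ)+2 from by ring,
      show 2*((a:ℚ)+2)-3 = 2*(a:ℚ)+1 from by ring,
      show (a:ℚ)+2-1 = (a:ℚ)+1 from by ring]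
  have h6 : (2*(a:ℚ)+3) ≠ 0 := by positivity
  have h7 : ((a:ℚ)+2) ≠ 0 := by positivity
  have h8 : ((a:ℚ)+1) ≠ 0 := by positivity
  field_simp
  ring

lemma chooseTwo (n : ℕ) : ((2*n+4).choose 2) = (n+2)*(2*n+3) := by
  rw [Nat.choose_two_right, show 2*n+4-1 = 2*n+3 from by omega,
      show (2*n+4)*(2*n+3) = ((n+2)*(2*n+3))*2 from by ring, Nat.mul_div_cancel _ (by norm_num)]

lemma chooseTwo' (n : ℕ) : ((2*n+2).choose 2) = (n+1)*(2*n+1) := by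
  rw [Nat.choose_two_right, show 2*n+2-1 = 2*n+1 from by omega,
      show (2*n+2)*(2*n+1) = ((n+1)*(2*n+1))*2 from by ring, Nat.mul_div_cancel _ (by norm_num)]

lemma Ralg2 (p : ℕ) :
    Rr (p+4) (p+3) = -2 * Rr (p+3) (p+3) - (-1:ℚ)^(p+2) * 2^(2*p+4) - 4 * Rr (p+3) (p+2) := by
  simp only [Rr]
  rw [show p+4 + (p+3) - 3 = 2*p+4 from by omega,
      show p+4 - (p+3) + 1 = 2 from by omega,
      show p+3 + (p+3) - 3 = 2*p+3 from by omega,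
      show p+3 - (p+3) + 1 = 1 from by omega,
      show p+3 + (p+2) - 3 = 2*p+2 from by omega,
      show p+3 - (p+2) + 1 = 2 from by omega,
      show 2*(p+3) - 2 = 2*p+4 from by omega,
      show 2*(p+2) - 2 = 2*p+2 from by omega,
      chooseTwo, Nat.choose_one_right, chooseTwo']
  push_cast
  rw [show 2*((p:ℚ)+3)-3 = 2*(p:ℚ)+3 from by ring,
      show (p:ℚ)+3-1 = (p:ℚ)+2 from by ring,
      show 2*((p:ℚ)+2)-3 = 2*(p:ℚ)+1 from by ring,
      show (p:ℚ)+2-1 = (p:ℚ)+1 from by ring]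
  have h1 : (2*(p:ℚ)+3) ≠ 0 := by positivity
  have h2 : ((p:ℚ)+2) ≠ 0 := by positivity
  have h3 : (2*(p:ℚ)+1) ≠ 0 := by positivity
  have h4 : ((p:ℚ)+1) ≠ 0 := by positivity
  field_simp
  ring

lemma Ralg3 (p : ℕ) :
    Rr (p+4) (p+4) = -2 * ((-1:ℚ)^(p+3) * 2^(2*p+6)) - 4 * Rr (p+3) (p+3) := by
  simp only [Rr]
  rw [show p+4 + (p+4) - 3 = 2*p+5 from by omega,
      show p+4 - (p+4) + 1 = 1 from by omega,
      show p+3 + (p+3) - 3 = 2*p+3 from by omega,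
      show p+3 - (p+3) + 1 = 1 from by omega,
      show 2*(p+4) - 2 = 2*p+6 from by omega,
      show 2*(p+3) - 2 = 2*p+4 from by omega,
      Nat.choose_one_right, Nat.choose_one_right]
  push_cast
  rw [show 2*((p:ℚ)+4)-3 = 2*(p:ℚ)+5 from by ring,
      show (p:ℚ)+4-1 = (p:ℚ)+3 from by ring,
      show 2*((p:ℚ)+3)-3 = 2*(p:ℚ)+3 from by ring,
      show (p:ℚ)+3-1 = (p:ℚ)+2 from by ring]
  have h1 : (2*(p:ℚ)+5) ≠ 0 := by positivity
  have h2 : ((p:ℚ)+3) ≠ 0 := by positivity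
  have h3 : (2*(p:ℚ)+3) ≠ 0 := by positivity
  have h4 : ((p:ℚ)+2) ≠ 0 := by positivity
  field_simp
  ring

lemma Sqbase22 : Sq 2 2 = Rr 2 2 := by
  rw [Sq, show Finset.Icc 1 2 = {1, 2} from rfl,
      Finset.sum_insert (by decide), Finset.sum_singleton]
  rw [Rr]
  norm_num [Aq]

lemma Sqbase32 : Sq 3 2 = Rr 3 2 := by
  rw [Sq, show Finset.Icc 1 3 = {1, 2, 3} from rfl,
      Finset.sum_insert (by decide), Finset.sum_insert (by decide), Finset.sum_singleton]
  rw [Rr]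
  norm_num [Aq]

lemma Sqbase33 : Sq 3 3 = Rr 3 3 := by
  rw [Sq, show Finset.Icc 1 3 = {1, 2, 3} from rfl,
      Finset.sum_insert (by decide), Finset.sum_insert (by decide), Finset.sum_singleton]
  rw [Rr]
  norm_num [Aq]

lemma mainInd : ∀ p : ℕ,
    (∀ j, 2 ≤ j → j ≤ p+2 → Sq (p+2) j = Rr (p+2) j) ∧
    (∀ j, 2 ≤ j → j ≤ p+3 → Sq (p+3) j = Rr (p+3) j) := by
  intro p
  induction p with
  | zero =>
    constructor
    · intro j hj2 hj
      have : j = 2 := by omega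
      subst this
      exact Sqbase22
    · intro j hj2 hj
      rcases (show j = 2 ∨ j = 3 by omega) with rfl | rfl
      · exact Sqbase32
      · exact Sqbase33
  | succ n ih =>
    constructor
    · intro j hj2 hj
      exact ih.2 j hj2 (by omega)
    · intro j hj2 hj
      rw [show n+1+3 = n+4 from by ring]
      have hrec := Srec (n+1) j hj2
      rw [show n+1+3 = n+4 from by ring, show n+1+2 = n+3 from by ring,
          show n+1+1 = n+2 from by ring] at hrec
      rw [hrec]
      rcases (show j = 2 ∨ (3 ≤ j ∧ j ≤ n+2) ∨ j = n+3 ∨ j = n+4 by omega) with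
        rfl | ⟨hj3, hjn⟩ | rfl | rfl
      · -- j = 2
        have c1 : Sq (n+3) 2 = Rr (n+3) 2 := ih.2 2 (by omega) (by omega)
        have c2 : Sq (n+2) 2 = Rr (n+2) 2 := ih.1 2 (by omega) (by omega)
        have c3 : Sq (n+3) 1 = 4 * (-1:ℚ)^(n+3) := by
          have := Scol1 (n+2)
          rwa [show n+2+1 = n+3 from by ring] at this
        rw [show (2:ℕ)-1 = 1 from rfl, c1, c2, c3]
        have r4 := Rr2 (n+2)
        have r3 := Rr2 (n+1)
        have r2 := Rr2 n
        rw [show n+2+2 = n+4 from by ring] at r4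
        rw [show n+1+2 = n+3 from by ring] at r3
        rw [r4, r3, r2]
        push_cast
        ring
      · -- 3 ≤ j ≤ n+2
        have c1 : Sq (n+3) j = Rr (n+3) j := ih.2 j hj2 (by omega)
        have c2 : Sq (n+2) j = Rr (n+2) j := ih.1 j hj2 (by omega)
        have c3 : Sq (n+3) (j-1) = Rr (n+3) (j-1) := ih.2 (j-1) (by omega) (by omega)
        rw [c1, c2, c3]
        obtain ⟨a, rfl⟩ : ∃ a, j = a + 3 := ⟨j - 3, by omega⟩
        obtain ⟨b, rfl⟩ : ∃ b, n = a + b + 1 := ⟨n - a - 1, by omega⟩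
        rw [show a+3-1 = a+2 from by omega]
        have := Ralg a b
        rw [show a+b+5 = a+b+1+4 from by ring, show a+b+4 = a+b+1+3 from by ring,
            show a+b+3 = a+b+1+2 from by ring] at this
        exact this.symm
      · -- j = n+3
        have c1 : Sq (n+3) (n+3) = Rr (n+3) (n+3) := ih.2 (n+3) (by omega) (by omega)
        have c2 : Sq (n+2) (n+3) = (-1:ℚ)^(n+2) * 2^(2*n+4) := by
          have := Stop (n+1)
          rwa [show n+1+1 = n+2 from by ring, show n+1+2 = n+3 from by ring,
               show 2*(n+1)+2 = 2*n+4 from by ring] at this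
        have c3 : Sq (n+3) (n+3-1) = Rr (n+3) (n+2) := by
          rw [show n+3-1 = n+2 from by omega]
          exact ih.2 (n+2) (by omega) (by omega)
        rw [c1, c2, c3]
        exact (Ralg2 n).symm
      · -- j = n+4
        have c1 : Sq (n+3) (n+4) = (-1:ℚ)^(n+3) * 2^(2*n+6) := by
          have := Stop (n+2)
          rwa [show n+2+1 = n+3 from by ring, show n+2+2 = n+4 from by ring,
               show 2*(n+2)+2 = 2*n+6 from by ring] at this
        have c2 : Sq (n+2) (n+4) = 0 := Szero (n+2) (n+4) (by omega)
        have c3 : Sq (n+3) (n+4-1) = Rr (n+3) (n+3) := by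
          rw [show n+4-1 = n+3 from by omega]
          exact ih.2 (n+3) (by omega) (by omega)
        rw [c1, c2, c3]
        rw [Ralg3 n]
        ring

theorem stmt_2 (i j : ℕ) (hj : 2 ≤ j) (hij : j ≤ i) :
    ∑ k ∈ Finset.Icc 1 i,
      (-1 : ℚ) ^ k * (2 : ℚ) ^ (2 * k) * ((2 * i - 1 : ℕ) : ℚ) / ((2 * k - 1 : ℕ) : ℚ) *
        (Nat.choose (i + k - 2) (2 * k - 2)) * (Nat.choose k (j - 1))
    = (-1 : ℚ) ^ i * (2 : ℚ) ^ (2 * j - 2) *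
        ((2 * (i : ℚ) ^ 2 - 2 * i + j - 1) / (((2 * (j : ℚ) - 3)) * ((j : ℚ) - 1))) *
        (Nat.choose (i + j - 3) (i - j + 1)) := by
  obtain ⟨p, rfl⟩ : ∃ p, i = p + 2 := ⟨i - 2, by omega⟩
  exact (mainInd p).1 j hj hij
end

section
/- For all positive integers i, j and integer n ≥ 2, (-1)^i · p_i(cos((2j-1)π/2^n)) = cos((2(2ij-i-j+1)-1)π/2^n), where p_i(x) = ∑_{k=1}^{i} (-1)^k · 2^{2k-2} · C(i+k-2, 2k-2) · ((2i-1)/(2k-1)) · x^{2k-1}. -/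
noncomputable def p (i : ℕ) (x : ℝ) : ℝ :=
  ∑ k ∈ Finset.Icc 1 i,
    (-1 : ℝ) ^ k * (2 : ℝ) ^ (2 * k - 2) * (Nat.choose (i + k - 2) (2 * k - 2)) *
      (((2 * i - 1 : ℕ) : ℝ) / ((2 * k - 1 : ℕ) : ℝ)) * x ^ (2 * k - 1)

open Finset Real

noncomputable def q (a : ℕ) (x : ℝ) : ℝ :=
  ∑ k ∈ Finset.range (a+1),
    (-1 : ℝ)^(k+1) * 4^k * (Nat.choose (a+k) (2*k)) * ((2*a+1)/(2*k+1)) * x^(2*k+1)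

lemma p_eq_q (a : ℕ) (x : ℝ) : p (a+1) x = q a x := by
  unfold p q
  rw [show Finset.Icc 1 (a+1) = Finset.Ico 1 (a+2) by rfl, Finset.sum_Ico_eq_sum_range]
  apply Finset.sum_congr (by norm_num)
  intro k _
  have h1 : 2 * (1 + k) - 2 = 2 * k := by omega
  have h2 : 2 * (1 + k) - 1 = 2 * k + 1 := by omega
  have h3 : (a + 1) + (1 + k) - 2 = a + k := by omega
  have h4 : 2 * (a + 1) - 1 = 2 * a + 1 := by omega
  rw [h1, h2, h3, h4, pow_mul]
  push_cast
  ring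

lemma q_extend (a N : ℕ) (h : a + 1 ≤ N) (x : ℝ) :
    q a x = ∑ k ∈ Finset.range N,
      (-1 : ℝ)^(k+1) * 4^k * (Nat.choose (a+k) (2*k)) * ((2*a+1)/(2*k+1)) * x^(2*k+1) := by
  unfold q
  apply Finset.sum_subset (Finset.range_subset_range.2 h)
  intro k _ hk
  simp only [Finset.mem_range, not_lt] at hk
  rw [Nat.choose_eq_zero_of_lt (by omega)]
  simp

-- key binomial identity in ℝ
lemma key_s6 (a m : ℕ) :
    (((a+m+1).choose (2*m+1) : ℝ)) * (2*m+1) = ((a+m+1).choose (2*m) : ℝ) * ((a:ℝ)+1-m) := by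
  rcases le_or_gt m (a+1) with h | h
  · have := Nat.choose_succ_right_eq (a+m+1) (2*m)
    have h2 : (a+m+1) - 2*m = a+1-m := by omega
    rw [h2] at this
    have : (((a+m+1).choose (2*m+1) * (2*m+1) : ℕ) : ℝ) = (((a+m+1).choose (2*m) * (a+1-m) : ℕ) : ℝ) := by
      rw [this]
    push_cast [Nat.cast_sub (by omega : m ≤ a+1)] at this
    push_cast
    linarith [this]
  · rw [Nat.choose_eq_zero_of_lt (by omega), Nat.choose_eq_zero_of_lt (by omega)]
    simp

lemma core_id (u v X Y Z : ℝ) (h21 : 2*u+1 ≠ 0) (h23 : 2*u+3 ≠ 0)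
    (hk : Y*(2*u+1) = X*(v+1-u)) :
    (X+2*Y+Z)*((2*v+5)/(2*u+3)) + Z*((2*v+1)/(2*u+3)) - X*((2*v+3)/(2*u+1))
      = 2*(Y+Z)*((2*v+3)/(2*u+3)) := by
  field_simp
  linear_combination 4 * hk

lemma qrec (a : ℕ) (x : ℝ) : q (a+2) x = (2 - 4*x^2) * q (a+1) x - q a x := by
  have h4 : (4*x^2) * q (a+1) x = ∑ k ∈ Finset.range (a+3),
      (-1 : ℝ)^k * 4^k * ((a+k).choose (2*k-2)) * ((2*(a:ℝ)+3)/((2*k-1 : ℕ):ℝ)) * x^(2*k+1) := by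
    rw [Finset.sum_range_succ' _ (a+2)]
    have hF0 : (-1 : ℝ)^0 * 4^0 * ((a+0).choose (2*0-2)) * ((2*(a:ℝ)+3)/((2*0-1 : ℕ):ℝ)) * x^(2*0+1) = 0 := by
      norm_num
    rw [hF0, add_zero]
    unfold q
    rw [Finset.mul_sum]
    apply Finset.sum_congr rfl
    intro k _
    have h1 : 2*(k+1)-2 = 2*k := by omega
    have h2 : 2*(k+1)-1 = 2*k+1 := by omega
    have h3 : a+(k+1) = a+1+k := by omega
    rw [h1, h2, h3]
    push_cast
    ring
  have main : q (a+2) x + q a x + (4*x^2) * q (a+1) x = 2 * q (a+1) x := by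
    rw [h4, q_extend (a+2) (a+3) (by omega), q_extend a (a+3) (by omega),
      q_extend (a+1) (a+3) (by omega), Finset.mul_sum, ← Finset.sum_add_distrib,
      ← Finset.sum_add_distrib]
    apply Finset.sum_congr rfl
    intro k _
    rcases k with _ | m
    · norm_num; ring
    · have h2 : 2*(m+1)-1 = 2*m+1 := by omega
      have h1 : 2*(m+1)-2 = 2*m := by omega
      rw [h1, h2, show a+2+(m+1) = a+m+3 by omega, show a+(m+1) = a+m+1 by omega,
        show a+1+(m+1) = a+m+2 by omega, show 2*(m+1) = 2*m+2 by omega]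
      have P1 : (a+m+2).choose (2*m+1) = (a+m+1).choose (2*m) + (a+m+1).choose (2*m+1) :=
        Nat.choose_succ_succ _ _
      have P2 : (a+m+2).choose (2*m+2) = (a+m+1).choose (2*m+1) + (a+m+1).choose (2*m+2) :=
        Nat.choose_succ_succ _ _
      have P3 : (a+m+3).choose (2*m+2) = (a+m+1).choose (2*m) + 2*((a+m+1).choose (2*m+1))
          + (a+m+1).choose (2*m+2) := by
        have := Nat.choose_succ_succ (a+m+2) (2*m+1)
        rw [show (a+m+2).succ = a+m+3 by rfl, show (2*m+1).succ = 2*m+2 by rfl] at this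
        rw [this, P1, P2]; ring
      rw [P3, P2]
      have h21 : (2*(m:ℝ)+1) ≠ 0 := by positivity
      have h23 : (2*(m:ℝ)+3) ≠ 0 := by positivity
      have hc := core_id (m:ℝ) (a:ℝ) (((a+m+1).choose (2*m) : ℕ) : ℝ)
        (((a+m+1).choose (2*m+1) : ℕ) : ℝ) (((a+m+1).choose (2*m+2) : ℕ) : ℝ) h21 h23 (key_s6 a m)
      push_cast at hc ⊢
      linear_combination ((-1 : ℝ)^(m+1+1) * 4^(m+1) * x^(2*(m+1)+1)) * hc
  linarith [main]

lemma cos_eq_q (a : ℕ) (θ : ℝ) :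
    Real.cos ((2*(a:ℝ)+1) * θ) = (-1 : ℝ)^(a+1) * q a (Real.cos θ) := by
  induction a using Nat.twoStepInduction with
  | zero =>
    unfold q
    simp [Finset.sum_range_one]
  | one =>
    unfold q
    rw [Finset.sum_range_succ, Finset.sum_range_one]
    norm_num
    rw [Real.cos_three_mul]
    ring
  | more a ih1 ih2 =>
    have trig : Real.cos ((2*((a:ℝ)+2)+1) * θ)
        = 2 * Real.cos (2*θ) * Real.cos ((2*((a:ℝ)+1)+1) * θ) - Real.cos ((2*(a:ℝ)+1) * θ) := by
      have e1 : (2*((a:ℝ)+2)+1) * θ = (2*((a:ℝ)+1)+1) * θ + 2*θ := by ring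
      have e2 : (2*(a:ℝ)+1) * θ = (2*((a:ℝ)+1)+1) * θ - 2*θ := by ring
      rw [e1, e2, Real.cos_add, Real.cos_sub]
      ring
    push_cast
    push_cast at ih1 ih2
    rw [trig, ih1, ih2, Real.cos_two_mul, show a+2 = a+1+1 by rfl, qrec]
    ring

theorem stmt_6 (i j n : ℕ) (hi : 1 ≤ i) (hj : 1 ≤ j) (hn : 2 ≤ n) :
    (-1 : ℝ) ^ i * p i (Real.cos (((2 * j - 1 : ℕ) : ℝ) * Real.pi / 2 ^ n))
      = Real.cos (((2 * (2 * i * j - i - j + 1) - 1 : ℕ) : ℝ) * Real.pi / 2 ^ n) := by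
  obtain ⟨a, rfl⟩ : ∃ a, i = a + 1 := ⟨i - 1, by omega⟩
  obtain ⟨b, rfl⟩ : ∃ b, j = b + 1 := ⟨j - 1, by omega⟩
  rw [p_eq_q, ← cos_eq_q a]
  congr 1
  have hnat : 2 * (2 * (a+1) * (b+1) - (a+1) - (b+1) + 1) - 1 = (2*a+1) * (2*b+1) := by
    have h1 : 2 * (a+1) * (b+1) = 2*(a*b) + 2*a + 2*b + 2 := by ring
    have h2 : (2*a+1) * (2*b+1) = 4*(a*b) + 2*a + 2*b + 1 := by ring
    omega
  rw [hnat, show 2*(b+1)-1 = 2*b+1 by omega]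
  push_cast
  ring
end

section
/- For integer n ≥ 2 and even integer r ≥ 0, cos^r(π/2^n) = (1/2^{r-1}) · [ (1/2)∑_{k=0}^{∞} (-1)^k (C(r, r/2 - k·2^{n-1}) − C(r, r/2 − (k+1)·2^{n-1})) + ∑_{j=1}^{2^{n-2}-1} ∑_{k=0}^{∞} (-1)^k (C(r, r/2 − (k·2^{n-1}+j)) − C(r, r/2 − ((k+1)·2^{n-1}−j))) · cos(jπ/2^{n-1}) ]. -/
/-- Binomial coefficient `C(r, m)` for integer lower index, zero when `m < 0`. -/
def ichoose (r : ℕ) (m : ℤ) : ℕ := if m < 0 then 0 else r.choose m.toNat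

open Finset in
private lemma cos_add_nat_mul_pi (x : ℝ) (k : ℕ) :
    Real.cos (x + k * Real.pi) = (-1) ^ k * Real.cos x := by
  induction k with
  | zero => simp
  | succ k ih =>
    push_cast
    rw [show x + ((k : ℝ) + 1) * Real.pi = (x + k * Real.pi) + Real.pi by ring,
      Real.cos_add_pi, ih]
    ring

private lemma sum_blocks {M : Type*} [AddCommMonoid M] (F : ℕ → M) (K N : ℕ) :
    ∑ k ∈ Finset.range K, ∑ s ∈ Finset.Ico (k * N) ((k + 1) * N), F s
      = ∑ s ∈ Finset.range (K * N), F s := by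
  induction K with
  | zero => simp
  | succ K ih =>
    rw [Finset.sum_range_succ, ih]
    simp only [Finset.range_eq_Ico]
    exact Finset.sum_Ico_consecutive F (Nat.zero_le _) (by rw [Nat.succ_mul]; omega)

private lemma block_sum (G : ℕ → ℝ) (h : ℕ) (hh : 1 ≤ h) (hmid : G h = 0) :
    ∑ i ∈ Finset.range (2 * h), G i
      = G 0 + ∑ j ∈ Finset.Icc 1 (h - 1), (G j + G (2 * h - j)) := by
  have hIcc : Finset.Icc 1 (h - 1) = Finset.Ico 1 h := by
    rw [← Finset.Ico_add_one_right_eq_Icc]; congr 1; omega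
  rw [hIcc, Finset.sum_Ico_eq_sum_range]
  have hsplit : ∑ i ∈ Finset.range (2 * h), G i
      = ∑ i ∈ Finset.Ico 0 (h + 1), G i + ∑ i ∈ Finset.Ico (h + 1) (2 * h), G i := by
    rw [Finset.sum_Ico_consecutive G (Nat.zero_le _) (by omega), Finset.range_eq_Ico]
  rw [hsplit]
  have h1 : ∑ i ∈ Finset.Ico 0 (h + 1), G i
      = G 0 + ∑ i ∈ Finset.range (h - 1), G (1 + i) := by
    rw [← Finset.range_eq_Ico, Finset.sum_range_succ, hmid, add_zero,
      show h = (h - 1) + 1 by omega, Finset.sum_range_succ']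
    rw [add_comm]
    congr 1
    exact Finset.sum_congr rfl fun i _ => by rw [add_comm]
  have h2 : ∑ i ∈ Finset.Ico (h + 1) (2 * h), G i
      = ∑ i ∈ Finset.range (h - 1), G (2 * h - (1 + i)) := by
    rw [Finset.sum_Ico_eq_sum_range, show 2 * h - (h + 1) = h - 1 by omega,
      ← Finset.sum_range_reflect]
    exact Finset.sum_congr rfl fun i hi => by
      have := Finset.mem_range.mp hi
      congr 1
      omega
  rw [h1, h2, Finset.sum_add_distrib]
  ring

private lemma lemA (m : ℕ) (θ : ℝ) :
    (2 * Real.cos θ) ^ (m + m) =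
      ((m + m).choose m : ℝ)
        + 2 * ∑ i ∈ Finset.range m,
            ((m + m).choose (m - (i + 1)) : ℝ) * Real.cos (2 * (i + 1) * θ) := by
  apply Complex.ofReal_injective
  push_cast
  set z : ℂ := (θ : ℂ) with hz
  set f : ℕ → ℂ :=
    fun k => Complex.exp ((2 * (k : ℂ) - ((m : ℂ) + m)) * z * Complex.I) * ((m + m).choose k) with hf
  have key : (2 * Complex.cos z) ^ (m + m) = ∑ k ∈ Finset.range (m + m + 1), f k := by
    rw [Complex.two_cos, add_pow]
    refine Finset.sum_congr rfl fun k hk => ?_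
    have hk' : k ≤ m + m := by
      have := Finset.mem_range.mp hk; omega
    rw [hf, ← Complex.exp_nat_mul, ← Complex.exp_nat_mul, ← Complex.exp_add]
    congr 2
    push_cast [hk']
    ring
  rw [key]
  have e1 : ∑ i ∈ Finset.Ico m (m + m + 1), f i = ∑ i ∈ Finset.range (m + 1), f (m + i) := by
    rw [Finset.sum_Ico_eq_sum_range, show m + m + 1 - m = m + 1 by omega]
  have hsplit : ∑ k ∈ Finset.range (m + m + 1), f k
      = ∑ k ∈ Finset.range m, f k + ∑ i ∈ Finset.range (m + 1), f (m + i) := by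
    rw [Finset.range_eq_Ico,
      ← Finset.sum_Ico_consecutive f (Nat.zero_le m) (by omega : m ≤ m + m + 1), e1,
      ← Finset.range_eq_Ico]
  have h1 : ∑ k ∈ Finset.range m, f k = ∑ i ∈ Finset.range m, f (m - (i + 1)) := by
    rw [← Finset.sum_range_reflect]
    exact Finset.sum_congr rfl fun i hi => by
      have := Finset.mem_range.mp hi
      congr 1
      omega
  have h2 : ∑ i ∈ Finset.range (m + 1), f (m + i)
      = f m + ∑ i ∈ Finset.range m, f (m + (i + 1)) := by
    rw [Finset.sum_range_succ' (fun i => f (m + i)) m]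
    simp [add_comm]
  rw [hsplit, h1, h2]
  have hfm : f m = ((m + m).choose m : ℂ) := by
    rw [hf]
    simp only
    rw [show (2 * (m : ℂ) - ((m : ℂ) + m)) = 0 by ring]
    simp
  have hterm : ∀ i ∈ Finset.range m,
      f (m - (i + 1)) + f (m + (i + 1))
        = 2 * (((m + m).choose (m - (i + 1)) : ℂ) * Complex.cos (2 * ((i : ℂ) + 1) * z)) := by
    intro i hi
    have him : i + 1 ≤ m := Finset.mem_range.mp hi
    have hch : (m + m).choose (m + (i + 1)) = (m + m).choose (m - (i + 1)) := by
      rw [← Nat.choose_symm (by omega : m + (i + 1) ≤ m + m)]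
      congr 1
      omega
    rw [hf]
    simp only [hch]
    have e1 : (2 * ((m - (i + 1) : ℕ) : ℂ) - ((m : ℂ) + m)) * z * Complex.I
        = -(2 * ((i : ℂ) + 1) * z) * Complex.I := by
      push_cast [him]; ring
    have e2 : (2 * ((m + (i + 1) : ℕ) : ℂ) - ((m : ℂ) + m)) * z * Complex.I
        = (2 * ((i : ℂ) + 1) * z) * Complex.I := by
      push_cast; ring
    rw [e1, e2]
    have h2c := Complex.two_cos (2 * ((i : ℂ) + 1) * z)
    rw [show (-(2 * ((i : ℂ) + 1) * z)) * Complex.I = -((2 * ((i : ℂ) + 1) * z) * Complex.I) by ring] at *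
    linear_combination ((m + m).choose (m - (i + 1)) : ℂ) * h2c.symm
  rw [hfm,
    show ∑ i ∈ Finset.range m, f (m - (i + 1))
        + (((m + m).choose m : ℂ) + ∑ i ∈ Finset.range m, f (m + (i + 1)))
      = ((m + m).choose m : ℂ)
        + (∑ i ∈ Finset.range m, f (m - (i + 1)) + ∑ i ∈ Finset.range m, f (m + (i + 1)))
      by ring,
    ← Finset.sum_add_distrib, Finset.sum_congr rfl hterm, ← Finset.mul_sum]
open Finset

theorem stmt_11 (r n : ℕ) (hr : Even r) (hn : 2 ≤ n) :
    (Real.cos (Real.pi / 2 ^ n)) ^ r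
      = (1 / (2 : ℝ) ^ ((r : ℤ) - 1)) *
          ((1 / 2) * ∑' k : ℕ, (-1 : ℝ) ^ k *
              ((ichoose r ((r : ℤ) / 2 - k * 2 ^ (n - 1)) : ℝ)
                - (ichoose r ((r : ℤ) / 2 - (k + 1) * 2 ^ (n - 1)) : ℝ))
            + ∑ j ∈ Finset.Icc 1 (2 ^ (n - 2) - 1),
                (∑' k : ℕ, (-1 : ℝ) ^ k *
                    ((ichoose r ((r : ℤ) / 2 - ((k : ℤ) * 2 ^ (n - 1) + j)) : ℝ)
                      - (ichoose r ((r : ℤ) / 2 - (((k : ℤ) + 1) * 2 ^ (n - 1) - j)) : ℝ)))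
                  * Real.cos ((j : ℝ) * Real.pi / 2 ^ (n - 1))) := by
  
  obtain ⟨m, hm⟩ := hr
  subst hm
  set h : ℕ := 2 ^ (n - 2) with hh
  set N : ℕ := 2 ^ (n - 1) with hN
  have hNh : N = 2 * h := by rw [hN, hh, ← pow_succ']; congr 1; omega
  have hh1 : 1 ≤ h := Nat.one_le_two_pow
  have hcast : (h : ℤ) = 2 ^ (n - 2) := by rw [hh]; push_cast; ring
  have hN2 : 2 ≤ N := by omega
  have hNR : ((2:ℝ)) ^ (n-1) = (N : ℝ) := by rw [hN]; push_cast; ring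
  set K : ℕ := m + 1 with hK
  clear_value h N K
  set c : ℕ → ℝ := fun s => (ichoose (m + m) ((m : ℤ) - (s : ℤ)) : ℝ) with hc
  set F : ℕ → ℝ := fun s => c s * Real.cos ((s : ℝ) * Real.pi / (N : ℝ)) with hF
  rw [hNR]
  -- basic facts
  have hNne : (N:ℝ) ≠ 0 := Nat.cast_ne_zero.mpr (by omega)
  have hdiv : ((m + m : ℕ) : ℤ) / 2 = (m : ℤ) := by push_cast; omega
  have hic_big : ∀ s : ℕ, m < s → (ichoose (m + m) ((m : ℤ) - (s : ℤ)) : ℝ) = 0 := by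
    intro s hs
    simp only [ichoose]
    rw [if_pos (by omega : (m : ℤ) - (s : ℤ) < 0)]
    simp
  have hc_big : ∀ s : ℕ, m < s → c s = 0 := by
    intro s hs
    simp only [hc]
    exact hic_big s hs
  have hc_le : ∀ s : ℕ, s ≤ m → c s = ((m + m).choose (m - s) : ℝ) := by
    intro s hs
    simp only [hc, ichoose]
    rw [if_neg (by omega : ¬ ((m : ℤ) - (s : ℤ) < 0))]
    have : ((m : ℤ) - (s : ℤ)).toNat = m - s := by omega
    rw [this]
  have hF_big : ∀ s : ℕ, m < s → F s = 0 := by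
    intro s hs
    simp only [hF]
    rw [hc_big s hs, zero_mul]
  -- cosine helpers
  have hcos0 : ∀ k : ℕ, Real.cos (((k * N : ℕ) : ℝ) * Real.pi / (N : ℝ)) = (-1 : ℝ) ^ k := by
    intro k
    have e : ((k * N : ℕ) : ℝ) * Real.pi / (N : ℝ) = 0 + (k : ℝ) * Real.pi := by
      push_cast
      field_simp
      ring
    rw [e, cos_add_nat_mul_pi, Real.cos_zero, mul_one]
  have hcos1 : ∀ k j : ℕ, Real.cos (((k * N + j : ℕ) : ℝ) * Real.pi / (N : ℝ))
      = (-1 : ℝ) ^ k * Real.cos ((j : ℝ) * Real.pi / (N : ℝ)) := by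
    intro k j
    have e : ((k * N + j : ℕ) : ℝ) * Real.pi / (N : ℝ)
        = (j : ℝ) * Real.pi / (N : ℝ) + (k : ℝ) * Real.pi := by
      push_cast
      field_simp
      ring
    rw [e, cos_add_nat_mul_pi]
  have hcos2 : ∀ k j : ℕ, j ≤ N → Real.cos ((((k + 1) * N - j : ℕ) : ℝ) * Real.pi / (N : ℝ))
      = (-1 : ℝ) ^ (k + 1) * Real.cos ((j : ℝ) * Real.pi / (N : ℝ)) := by
    intro k j hj
    have hj' : j ≤ (k + 1) * N := le_trans hj (Nat.le_mul_of_pos_left N (Nat.succ_pos k))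
    have e : (((k + 1) * N - j : ℕ) : ℝ) * Real.pi / (N : ℝ)
        = -((j : ℝ) * Real.pi / (N : ℝ)) + ((k + 1 : ℕ) : ℝ) * Real.pi := by
      push_cast [Nat.cast_sub hj']
      field_simp
      ring
    rw [e, cos_add_nat_mul_pi, Real.cos_neg]
  have hF_mid : ∀ k : ℕ, F (k * N + h) = 0 := by
    intro k
    simp only [hF]
    rw [hcos1 k h]
    have e : (h : ℝ) * Real.pi / (N : ℝ) = Real.pi / 2 := by
      rw [hNh]
      push_cast
      rw [div_eq_div_iff (by positivity) (by norm_num)]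
      ring
    rw [e, Real.cos_pi_div_two]
    ring
  have hFkN : ∀ k : ℕ, F (k * N) = (-1 : ℝ) ^ k * c (k * N) := by
    intro k
    simp only [hF]
    rw [hcos0 k]
    ring
  -- integer argument normalizations
  have harg1 : ∀ k : ℕ, ((m + m : ℕ) : ℤ) / 2 - (k : ℤ) * 2 ^ (n - 1) = (m : ℤ) - ((k * N : ℕ) : ℤ) := by
    intro k
    rw [hdiv]
    congr 1
    push_cast [hN]
    ring
  have harg2 : ∀ k : ℕ, ((m + m : ℕ) : ℤ) / 2 - ((k : ℤ) + 1) * 2 ^ (n - 1)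
      = (m : ℤ) - (((k + 1) * N : ℕ) : ℤ) := by
    intro k
    rw [hdiv]
    congr 1
    push_cast [hN]
    ring
  have harg3 : ∀ k j : ℕ, ((m + m : ℕ) : ℤ) / 2 - ((k : ℤ) * 2 ^ (n - 1) + (j : ℤ))
      = (m : ℤ) - ((k * N + j : ℕ) : ℤ) := by
    intro k j
    rw [hdiv]
    congr 1
    push_cast [hN]
    ring
  have harg4 : ∀ k j : ℕ, j ≤ N → ((m + m : ℕ) : ℤ) / 2 - (((k : ℤ) + 1) * 2 ^ (n - 1) - (j : ℤ))
      = (m : ℤ) - (((k + 1) * N - j : ℕ) : ℤ) := by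
    intro k j hj
    have hj' : j ≤ (k + 1) * N := le_trans hj (Nat.le_mul_of_pos_left N (Nat.succ_pos k))
    rw [hdiv]
    congr 1
    rw [Nat.cast_sub hj']
    push_cast [hN]
    ring
  have hbig : ∀ k : ℕ, K ≤ k → m < k * N := by
    intro k hk
    calc m < K * 2 := by omega
    _ ≤ k * N := Nat.mul_le_mul hk hN2
  -- first tsum
  have ht1 : ∀ k : ℕ, k ∉ Finset.range K →
      (-1 : ℝ) ^ k * ((ichoose (m + m) (((m + m : ℕ) : ℤ) / 2 - (k : ℤ) * 2 ^ (n - 1)) : ℝ)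
        - (ichoose (m + m) (((m + m : ℕ) : ℤ) / 2 - ((k : ℤ) + 1) * 2 ^ (n - 1)) : ℝ)) = 0 := by
    intro k hk
    have hk' : K ≤ k := by
      simp only [Finset.mem_range, not_lt] at hk
      exact hk
    rw [harg1 k, harg2 k, hic_big _ (hbig k hk'), hic_big _ (hbig (k + 1) (by omega))]
    ring
  rw [tsum_eq_sum ht1]
  have hksum : ∀ k ∈ Finset.range K,
      (-1 : ℝ) ^ k * ((ichoose (m + m) (((m + m : ℕ) : ℤ) / 2 - (k : ℤ) * 2 ^ (n - 1)) : ℝ)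
        - (ichoose (m + m) (((m + m : ℕ) : ℤ) / 2 - ((k : ℤ) + 1) * 2 ^ (n - 1)) : ℝ))
      = F (k * N) + F ((k + 1) * N) := by
    intro k _
    rw [harg1 k, harg2 k, hFkN k, hFkN (k + 1)]
    simp only [hc]
    ring
  rw [Finset.sum_congr rfl hksum]
  -- j sums
  have hjsum : ∀ (j : ℤ), j ∈ Finset.Icc 1 (2 ^ (n - 2) - 1) →
      (∑' (k : ℕ), (-1 : ℝ) ^ k *
          ((ichoose (m + m) (((m + m : ℕ) : ℤ) / 2 - ((k : ℤ) * 2 ^ (n - 1) + j)) : ℝ)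
            - (ichoose (m + m) (((m + m : ℕ) : ℤ) / 2 - (((k : ℤ) + 1) * 2 ^ (n - 1) - j)) : ℝ)))
        * Real.cos ((j : ℝ) * Real.pi / (N : ℝ))
      = ∑ k ∈ Finset.range K, (F (k * N + j.toNat) + F ((k + 1) * N - j.toNat)) := by
    intro j hj
    rw [Finset.mem_Icc] at hj
    lift j to ℕ using (by omega)
    rw [Int.toNat_natCast, Int.cast_natCast]
    have hjN : j ≤ N := by omega
    have hvan : ∀ k : ℕ, k ∉ Finset.range K →
        (-1 : ℝ) ^ k *
          ((ichoose (m + m) (((m + m : ℕ) : ℤ) / 2 - ((k : ℤ) * 2 ^ (n - 1) + (j : ℤ))) : ℝ)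
            - (ichoose (m + m) (((m + m : ℕ) : ℤ) / 2 - (((k : ℤ) + 1) * 2 ^ (n - 1) - (j : ℤ))) : ℝ)) = 0 := by
      intro k hk
      have hk' : K ≤ k := by
        simp only [Finset.mem_range, not_lt] at hk
        exact hk
      have hm1 : m < k * N + j := by
        have := hbig k hk'
        omega
      have hm2 : m < (k + 1) * N - j := by
        have h1 := hbig k hk'
        have h2 : (k + 1) * N = k * N + N := by rw [Nat.succ_mul]
        omega
      rw [harg3 k j, harg4 k j hjN, hic_big _ hm1, hic_big _ hm2]
      ring
    rw [tsum_eq_sum hvan, Finset.sum_mul]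
    refine Finset.sum_congr rfl fun k _ => ?_
    rw [harg3 k j, harg4 k j hjN]
    have f1 : F (k * N + j) = c (k * N + j) * ((-1 : ℝ) ^ k * Real.cos ((j : ℝ) * Real.pi / (N : ℝ))) := by
      simp only [hF]
      rw [hcos1 k j]
    have f2 : F ((k + 1) * N - j)
        = c ((k + 1) * N - j) * ((-1 : ℝ) ^ (k + 1) * Real.cos ((j : ℝ) * Real.pi / (N : ℝ))) := by
      simp only [hF]
      rw [hcos2 k j hjN]
    rw [f1, f2]
    simp only [hc]
    ring
  rw [Finset.sum_congr rfl hjsum]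
  have hreindex : ∑ j ∈ Finset.Icc (1 : ℤ) (2 ^ (n - 2) - 1),
        ∑ k ∈ Finset.range K, (F (k * N + j.toNat) + F ((k + 1) * N - j.toNat))
      = ∑ j ∈ Finset.Icc 1 (h - 1),
        ∑ k ∈ Finset.range K, (F (k * N + j) + F ((k + 1) * N - j)) := by
    refine Finset.sum_nbij' Int.toNat Nat.cast ?_ ?_ ?_ ?_ ?_
    · intro a ha
      rw [Finset.mem_Icc] at ha ⊢
      omega
    · intro a ha
      rw [Finset.mem_Icc] at ha ⊢
      omega
    · intro a ha
      rw [Finset.mem_Icc] at ha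
      omega
    · intro a ha
      rw [Finset.mem_Icc] at ha
      omega
    · intro a ha
      rfl
  rw [hreindex]
  rw [Finset.sum_comm]
  have hKN1 : m + 1 ≤ K * N := by
    calc m + 1 ≤ K * 2 := by omega
    _ ≤ K * N := Nat.mul_le_mul_left K hN2
  have hFKN : F (K * N) = 0 := hF_big _ (by omega)
  have hblock : ∀ k : ℕ,
      ∑ j ∈ Finset.Icc 1 (h - 1), (F (k * N + j) + F ((k + 1) * N - j))
        = (∑ s ∈ Finset.Ico (k * N) ((k + 1) * N), F s) - F (k * N) := by
    intro k
    have hb := block_sum (fun i => F (k * N + i)) h hh1 (hF_mid k)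
    simp only [Nat.add_zero] at hb
    have e0 : ∑ i ∈ Finset.range (2 * h), F (k * N + i)
        = ∑ s ∈ Finset.Ico (k * N) ((k + 1) * N), F s := by
      rw [Finset.sum_Ico_eq_sum_range,
        show (k + 1) * N - k * N = N from by rw [Nat.succ_mul]; omega, hNh]
    have e2 : ∑ j ∈ Finset.Icc 1 (h - 1), (F (k * N + j) + F (k * N + (2 * h - j)))
        = ∑ j ∈ Finset.Icc 1 (h - 1), (F (k * N + j) + F ((k + 1) * N - j)) := by
      refine Finset.sum_congr rfl fun j hj => ?_
      rw [Finset.mem_Icc] at hj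
      have e3 : k * N + (2 * h - j) = (k + 1) * N - j := by
        have hsm : (k + 1) * N = k * N + N := by ring
        omega
      rw [e3]
    rw [e0, e2] at hb
    linarith [hb]
  rw [Finset.sum_congr rfl (fun k (_ : k ∈ Finset.range K) => hblock k)]
  have hsplit1 : ∑ k ∈ Finset.range K, (F (k * N) + F ((k + 1) * N))
      = ∑ k ∈ Finset.range K, F (k * N) + ∑ k ∈ Finset.range K, F ((k + 1) * N) :=
    Finset.sum_add_distrib
  have hsplit2 : ∑ k ∈ Finset.range K, ((∑ s ∈ Finset.Ico (k * N) ((k + 1) * N), F s) - F (k * N))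
      = ∑ k ∈ Finset.range K, (∑ s ∈ Finset.Ico (k * N) ((k + 1) * N), F s)
        - ∑ k ∈ Finset.range K, F (k * N) :=
    Finset.sum_sub_distrib _ _
  have htel : ∑ k ∈ Finset.range K, F ((k + 1) * N) - ∑ k ∈ Finset.range K, F (k * N)
      = F (K * N) - F 0 := by
    rw [← Finset.sum_sub_distrib]
    have := Finset.sum_range_sub (fun k => F (k * N)) K
    simp only [Nat.zero_mul] at this
    exact this
  have hT : ∑ k ∈ Finset.range K, (∑ s ∈ Finset.Ico (k * N) ((k + 1) * N), F s)
      = ∑ s ∈ Finset.range (K * N), F s := sum_blocks F K N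
  have hzero : ∑ s ∈ Finset.Ico (m + 1) (K * N), F s = 0 :=
    Finset.sum_eq_zero fun s hs => hF_big s (by have := (Finset.mem_Ico.mp hs).1; omega)
  have hrange : ∑ s ∈ Finset.range (K * N), F s = F 0 + ∑ i ∈ Finset.range m, F (i + 1) := by
    rw [Finset.range_eq_Ico, ← Finset.sum_Ico_consecutive F (Nat.zero_le (m + 1)) hKN1, hzero,
      add_zero, ← Finset.range_eq_Ico, Finset.sum_range_succ' F m]
    ring
  have hbr : (1 : ℝ) / 2 * ∑ k ∈ Finset.range K, (F (k * N) + F ((k + 1) * N))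
      + ∑ k ∈ Finset.range K, ((∑ s ∈ Finset.Ico (k * N) ((k + 1) * N), F s) - F (k * N))
      = 1 / 2 * F 0 + ∑ i ∈ Finset.range m, F (i + 1) := by
    rw [hsplit1, hsplit2, hT, hrange]
    rw [hFKN] at htel
    linarith [htel]
  rw [hbr]
  have hF0 : F 0 = ((m + m).choose m : ℝ) := by
    simp only [hF]
    rw [hc_le 0 (Nat.zero_le m)]
    norm_num
  have h2n : (2 : ℝ) ^ n = 2 * (N : ℝ) := by
    rw [← hNR, ← pow_succ']
    congr 1
    omega
  have hFi : ∀ i ∈ Finset.range m, F (i + 1)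
      = ((m + m).choose (m - (i + 1)) : ℝ) * Real.cos (2 * ((i : ℝ) + 1) * (Real.pi / 2 ^ n)) := by
    intro i hi
    have him : i + 1 ≤ m := Finset.mem_range.mp hi
    simp only [hF]
    have e : ((i + 1 : ℕ) : ℝ) * Real.pi / (N : ℝ) = 2 * ((i : ℝ) + 1) * (Real.pi / 2 ^ n) := by
      rw [h2n]
      push_cast
      field_simp
    rw [hc_le (i + 1) him, e]
  rw [hF0, Finset.sum_congr rfl hFi]
  have lem := lemA m (Real.pi / 2 ^ n)
  rw [mul_pow] at lem
  have hpow : (2 : ℝ) ^ (((m + m : ℕ) : ℤ) - 1) = 2 ^ (m + m) / 2 := by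
    rw [zpow_sub₀ (two_ne_zero), zpow_natCast, zpow_one]
  rw [hpow]
  have h2mm : (0 : ℝ) < 2 ^ (m + m) := by positivity
  rw [one_div_div, div_mul_eq_mul_div, eq_div_iff (ne_of_gt h2mm)]
  linear_combination lem
end

section
/- For integer n ≥ 2 and odd integer r ≥ 1, cos^r(π/2^n) = (1/2^{r-1}) · ∑_{j=1}^{2^{n-2}} ∑_{k=0}^{∞} (-1)^k (C(r, (r-1)/2 − (k·2^{n-1}+j−1)) − C(r, (r-1)/2 − ((k+1)·2^{n-1}−j))) · cos((2j-1)π/2^n). -/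
open Finset

lemma ichoose_eq (s t : ℕ) :
    ichoose (2*s+1) ((s:ℤ) - t) = if t ≤ s then (2*s+1).choose (s-t) else 0 := by
  unfold ichoose
  rcases le_or_gt t s with h|h
  · rw [if_neg (by omega), if_pos h]
    congr 1
    omega
  · rw [if_pos (by omega), if_neg (by omega)]

lemma pair_exp (z : ℂ) (a b : ℕ) :
    Complex.exp (z*Complex.I) ^ a * Complex.exp (-z*Complex.I) ^ (a+b)
      + Complex.exp (z*Complex.I) ^ (a+b) * Complex.exp (-z*Complex.I) ^ a
    = 2 * Complex.cos ((b:ℂ) * z) := by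
  have h1 : Complex.exp (z*Complex.I) * Complex.exp (-z*Complex.I) = 1 := by
    rw [← Complex.exp_add]; ring_nf; exact Complex.exp_zero
  have h2 : Complex.exp (z*Complex.I) ^ b = Complex.exp ((b:ℂ)*z*Complex.I) := by
    rw [← Complex.exp_nat_mul]; congr 1; ring
  have h3 : Complex.exp (-z*Complex.I) ^ b = Complex.exp (-((b:ℂ)*z)*Complex.I) := by
    rw [← Complex.exp_nat_mul]; congr 1; ring
  calc Complex.exp (z*Complex.I) ^ a * Complex.exp (-z*Complex.I) ^ (a+b)
      + Complex.exp (z*Complex.I) ^ (a+b) * Complex.exp (-z*Complex.I) ^ a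
      = (Complex.exp (z*Complex.I) * Complex.exp (-z*Complex.I)) ^ a *
          (Complex.exp (z*Complex.I) ^ b + Complex.exp (-z*Complex.I) ^ b) := by
        rw [mul_pow, pow_add, pow_add]; ring
    _ = Complex.exp ((b:ℂ)*z*Complex.I) + Complex.exp (-((b:ℂ)*z)*Complex.I) := by
        rw [h1, one_pow, one_mul, h2, h3]
    _ = 2 * Complex.cos ((b:ℂ) * z) := (Complex.two_cos _).symm

lemma cos_pow_complex (s : ℕ) (z : ℂ) :
    (Complex.cos z) ^ (2*s+1) = (1/2^(2*s)) *
      ∑ t ∈ Finset.range (s+1),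
        ((2*s+1).choose (s-t) : ℂ) * Complex.cos (((2*t+1 : ℕ) : ℂ) * z) := by
  have hsplit : ∀ h : ℕ → ℂ, ∑ m ∈ Finset.range (2*s+1+1), h m
      = ∑ m ∈ Finset.range (s+1), (h m + h (2*s+1-m)) := by
    intro h
    rw [show 2*s+1+1 = (s+1)+(s+1) from by ring, Finset.sum_range_add,
      ← Finset.sum_range_reflect (fun i => h (s+1+i)) (s+1), ← Finset.sum_add_distrib]
    refine Finset.sum_congr rfl fun m hm => ?_
    simp only [Finset.mem_range] at hm
    have : s+1+(s+1-1-m) = 2*s+1-m := by omega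
    rw [this]
  have key : (2 * Complex.cos z) ^ (2*s+1)
      = ∑ m ∈ Finset.range (s+1), ((2*s+1).choose m : ℂ) *
          (2 * Complex.cos (((2*(s-m)+1:ℕ):ℂ) * z)) := by
    rw [Complex.two_cos, add_pow, hsplit]
    refine Finset.sum_congr rfl fun m hm => ?_
    simp only [Finset.mem_range] at hm
    have e1 : 2*s+1-(2*s+1-m) = m := by omega
    rw [e1, Nat.choose_symm (show m ≤ 2*s+1 by omega)]
    have e2 : 2*s+1-m = m + (2*(s-m)+1) := by omega
    rw [e2]
    linear_combination ((2*s+1).choose m : ℂ) * pair_exp z m (2*(s-m)+1)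
  have reflect : ∑ m ∈ Finset.range (s+1), ((2*s+1).choose m : ℂ) *
          (2 * Complex.cos (((2*(s-m)+1:ℕ):ℂ) * z))
      = ∑ t ∈ Finset.range (s+1), ((2*s+1).choose (s-t) : ℂ) *
          (2 * Complex.cos (((2*t+1:ℕ):ℂ) * z)) := by
    rw [← Finset.sum_range_reflect
      (fun t => ((2*s+1).choose (s-t) : ℂ) * (2 * Complex.cos (((2*t+1:ℕ):ℂ) * z))) (s+1)]
    refine Finset.sum_congr rfl fun m hm => ?_
    simp only [Finset.mem_range] at hm
    have h1 : s+1-1-m = s-m := by omega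
    have h2 : s-(s-m) = m := by omega
    rw [h1, h2]
  have key2 : (2:ℂ)^(2*s+1) * (Complex.cos z)^(2*s+1)
      = 2 * ∑ t ∈ Finset.range (s+1), ((2*s+1).choose (s-t):ℂ) *
          Complex.cos (((2*t+1:ℕ):ℂ) * z) := by
    rw [← mul_pow, key, reflect, Finset.mul_sum]
    exact Finset.sum_congr rfl fun t _ => by ring
  have h2 : (2:ℂ)^(2*s) ≠ 0 := pow_ne_zero _ two_ne_zero
  rw [one_div, inv_mul_eq_div, eq_div_iff h2]
  linear_combination (1/2 : ℂ) * key2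

lemma cos_pow_real (s : ℕ) (θ : ℝ) :
    (Real.cos θ) ^ (2*s+1) = (1/2^(2*s)) *
      ∑ t ∈ Finset.range (s+1),
        ((2*s+1).choose (s-t) : ℝ) * Real.cos (((2*t+1 : ℕ) : ℝ) * θ) := by
  have h := cos_pow_complex s (θ:ℂ)
  apply Complex.ofReal_injective
  push_cast [Complex.ofReal_cos] at h ⊢
  exact h

lemma sum_blocks_s12 (g : ℕ → ℝ) (N : ℕ) : ∀ K : ℕ,
    ∑ t ∈ Finset.range (K*N), g t = ∑ k ∈ Finset.range K, ∑ i ∈ Finset.range N, g (k*N+i) := by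
  intro K
  induction K with
  | zero => simp
  | succ k ih => rw [Nat.succ_mul, Finset.sum_range_add, ih, Finset.sum_range_succ]

lemma inner_reindex (g : ℕ → ℝ) (M b : ℕ) :
    ∑ i ∈ Finset.range (2*M), g (b+i)
      = ∑ j ∈ Finset.Icc 1 M, (g (b+j-1) + g (b+2*M-j)) := by
  have h1 : ∑ j ∈ Finset.Icc 1 M, g (b+j-1) = ∑ i ∈ Finset.range M, g (b+i) := by
    rw [← Finset.Ico_add_one_right_eq_Icc, Finset.sum_Ico_eq_sum_range]
    exact Finset.sum_congr rfl fun i _ => by congr 1; omega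
  have h2 : ∑ j ∈ Finset.Icc 1 M, g (b+2*M-j) = ∑ i ∈ Finset.range M, g (b+(M+i)) := by
    rw [← Finset.Ico_add_one_right_eq_Icc, Finset.sum_Ico_eq_sum_range]
    rw [← Finset.sum_range_reflect (fun i => g (b+(M+i))) M]
    refine Finset.sum_congr rfl fun i hi => ?_
    simp only [Finset.mem_range] at hi
    congr 1
    omega
  rw [Finset.sum_add_distrib, h1, h2, two_mul, Finset.sum_range_add]

lemma cosA (n N k j : ℕ) (h2n : (2:ℝ)^n = 2*(N:ℝ)) (hj : 1 ≤ j) :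
    Real.cos (((2*(k*N+j-1)+1:ℕ):ℝ) * (Real.pi/2^n))
      = (-1)^k * Real.cos (((2*j-1:ℕ):ℝ) * (Real.pi/2^n)) := by
  have h0 : (2:ℝ)^n ≠ 0 := by positivity
  have harg : ((2*(k*N+j-1)+1:ℕ):ℝ) * (Real.pi/2^n)
      = ((2*j-1:ℕ):ℝ) * (Real.pi/2^n) + (k:ℝ)*Real.pi := by
    rw [show (2*(k*N+j-1)+1:ℕ) = 2*j-1 + 2*(k*N) from by omega]
    push_cast [Nat.cast_sub (show 1 ≤ 2*j from by omega)]
    have hNne : (N:ℝ) ≠ 0 := by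
      have h1 : (0:ℝ) < 2*(N:ℝ) := by rw [← h2n]; positivity
      intro h; rw [h] at h1; norm_num at h1
    rw [h2n]
    field_simp
  rw [harg, Real.cos_add_nat_mul_pi]

lemma cosB (n N M k j : ℕ) (h2n : (2:ℝ)^n = 2*(N:ℝ)) (hNM : N = 2*M)
    (hj1 : 1 ≤ j) (hjM : j ≤ M) :
    Real.cos (((2*((k+1)*N-j)+1:ℕ):ℝ) * (Real.pi/2^n))
      = -((-1:ℝ)^k * Real.cos (((2*j-1:ℕ):ℝ) * (Real.pi/2^n))) := by
  have h0 : (2:ℝ)^n ≠ 0 := by positivity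
  have hjN : j ≤ (k+1)*N := le_trans (le_trans hjM (by omega : M ≤ N))
    (Nat.le_mul_of_pos_left N (Nat.succ_pos k))
  have harg : ((2*((k+1)*N-j)+1:ℕ):ℝ) * (Real.pi/2^n)
      = ((k+1:ℕ):ℝ)*Real.pi - ((2*j-1:ℕ):ℝ) * (Real.pi/2^n) := by
    rw [show (2*((k+1)*N-j)+1:ℕ) = 2*((k+1)*N) - (2*j-1) from by omega]
    push_cast [Nat.cast_sub (show 2*j-1 ≤ 2*((k+1)*N) from by omega),
      Nat.cast_sub (show 1 ≤ 2*j from by omega)]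
    have hNne : (N:ℝ) ≠ 0 := by
      have h1 : (0:ℝ) < 2*(N:ℝ) := by rw [← h2n]; positivity
      intro h; rw [h] at h1; norm_num at h1
    rw [h2n]
    field_simp
  rw [harg, Real.cos_nat_mul_pi_sub, pow_succ]
  ring

theorem stmt_12 (r n : ℕ) (hr : Odd r) (hr1 : 1 ≤ r) (hn : 2 ≤ n) :
    (Real.cos (Real.pi / 2 ^ n)) ^ r
      = (1 / (2 : ℝ) ^ (r - 1)) *
          ∑ j ∈ Finset.Icc (1 : ℕ) (2 ^ (n - 2)),
            (∑' k : ℕ, (-1 : ℝ) ^ k *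
                ((ichoose r (((r : ℤ) - 1) / 2 - ((k : ℤ) * 2 ^ (n - 1) + (j : ℤ) - 1)) : ℝ)
                  - (ichoose r (((r : ℤ) - 1) / 2 - (((k : ℤ) + 1) * 2 ^ (n - 1) - (j : ℤ))) : ℝ)))
              * Real.cos (((2 * j - 1 : ℕ) : ℝ) * Real.pi / 2 ^ n) := by
  obtain ⟨s, rfl⟩ := hr
  obtain ⟨M, hM⟩ : ∃ M, (2:ℕ)^(n-2) = M := ⟨_, rfl⟩
  obtain ⟨N, hN⟩ : ∃ N, (2:ℕ)^(n-1) = N := ⟨_, rfl⟩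
  rw [hM]
  have hNM : N = 2*M := by
    rw [← hN, ← hM, ← pow_succ']
    congr 1
    omega
  have hM1 : 1 ≤ M := hM ▸ Nat.one_le_two_pow
  have hN2 : 2 ≤ N := by omega
  have hMN : M ≤ N := by omega
  have hcastN : ((N:ℕ):ℤ) = 2^(n-1) := by rw [← hN]; push_cast; ring
  have h2n : (2:ℝ)^n = 2*(N:ℝ) := by
    rw [show ((N:ℕ):ℝ) = 2^(n-1) from by rw [← hN]; push_cast; ring, ← pow_succ']
    congr 1
    omega
  have hdiv : (((2*s+1:ℕ):ℤ) - 1)/2 = (s:ℤ) := by omega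
  set G : ℕ → ℝ := fun t =>
    ((if t ≤ s then (2*s+1).choose (s-t) else 0 : ℕ) : ℝ) *
      Real.cos (((2*t+1:ℕ):ℝ) * (Real.pi/2^n)) with hG
  rw [cos_pow_real s (Real.pi/2^n), show 2*s+1-1 = 2*s from by omega]
  simp only [mul_div_assoc]
  congr 1
  calc ∑ t ∈ Finset.range (s+1),
        ((2*s+1).choose (s-t):ℝ) * Real.cos (((2*t+1:ℕ):ℝ) * (Real.pi/2^n))
      = ∑ t ∈ Finset.range (s+1), G t := by
        refine Finset.sum_congr rfl fun t ht => ?_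
        simp only [Finset.mem_range] at ht
        simp only [hG]
        rw [if_pos (by omega : t ≤ s)]
    _ = ∑ t ∈ Finset.range ((s+1)*N), G t := by
        have hsN : s+1 ≤ (s+1)*N := Nat.le_mul_of_pos_right _ (by omega)
        refine Finset.sum_subset ?_ ?_
        · exact Finset.range_subset_range.mpr hsN
        · intro t ht hts
          simp only [Finset.mem_range, not_lt] at hts
          simp only [hG]
          rw [if_neg (by omega)]
          simp
    _ = ∑ k ∈ Finset.range (s+1), ∑ i ∈ Finset.range N, G (k*N+i) := sum_blocks_s12 _ _ _
    _ = ∑ k ∈ Finset.range (s+1), ∑ j ∈ Finset.Icc 1 M,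
          (G (k*N+j-1) + G ((k+1)*N-j)) := by
        refine Finset.sum_congr rfl fun k _ => ?_
        rw [show (Finset.range N) = Finset.range (2*M) from by rw [hNM]]
        rw [inner_reindex (G) M (k*N)]
        refine Finset.sum_congr rfl fun j hj => ?_
        simp only [Finset.mem_Icc] at hj
        have hkk : (k+1)*N = k*N+N := by ring
        have h1 : k*N+2*M-j = (k+1)*N-j := by omega
        rw [h1]
    _ = ∑ j ∈ Finset.Icc 1 M, ∑ k ∈ Finset.range (s+1),
          (G (k*N+j-1) + G ((k+1)*N-j)) := Finset.sum_comm
    _ = _ := by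
        refine Finset.sum_congr rfl fun j hj => ?_
        simp only [Finset.mem_Icc] at hj
        obtain ⟨hj1, hjM⟩ := hj
        have hjN : ∀ k : ℕ, j ≤ (k+1)*N := fun k =>
          le_trans (le_trans hjM hMN) (Nat.le_mul_of_pos_left N (Nat.succ_pos k))
        have e1 : ∀ k : ℕ, (k:ℤ)*2^(n-1) + (j:ℤ) - 1 = (((k*N+j-1 : ℕ)):ℤ) := by
          intro k
          rw [← hcastN]
          push_cast [Nat.cast_sub (show 1 ≤ k*N+j from le_trans hj1 (Nat.le_add_left j (k*N)))]
          ring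
        have e2 : ∀ k : ℕ, ((k:ℤ)+1)*2^(n-1) - (j:ℤ) = ((((k+1)*N-j : ℕ)):ℤ) := by
          intro k
          rw [← hcastN]
          push_cast [Nat.cast_sub (hjN k)]
          ring
        have hv : ∀ k ∉ Finset.range (s+1), (-1 : ℝ) ^ k *
            ((ichoose (2*s+1) ((((2*s+1:ℕ) : ℤ) - 1) / 2 - ((k : ℤ) * 2 ^ (n - 1) + (j : ℤ) - 1)) : ℝ)
              - (ichoose (2*s+1) ((((2*s+1:ℕ) : ℤ) - 1) / 2 - (((k : ℤ) + 1) * 2 ^ (n - 1) - (j : ℤ))) : ℝ)) = 0 := by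
          intro k hk
          simp only [Finset.mem_range, not_lt] at hk
          have hbig : (s+1)*N ≤ k*N := Nat.mul_le_mul_right N hk
          have hsN : s+1 ≤ (s+1)*N := Nat.le_mul_of_pos_right _ (by omega)
          have hkk : (k+1)*N = k*N+N := by ring
          rw [hdiv, e1 k, e2 k, ichoose_eq, ichoose_eq,
            if_neg (by omega), if_neg (by omega)]
          simp
        rw [tsum_eq_sum hv, Finset.sum_mul]
        refine Finset.sum_congr rfl fun k _ => ?_
        rw [hdiv, e1 k, e2 k, ichoose_eq, ichoose_eq]
        simp only [hG]
        rw [cosA n N k j h2n hj1, cosB n N M k j h2n hNM hj1 hjM]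
        ring
end

section
/- For positive integers n ≥ 2 and p, (1/2^{n-2}) · ∑_{i=1}^{2^{n-2}} (2cos((2i-1)π/2^n))^{2p} = ∑_{k=0}^{⌊p/2^{n-1}⌋} (-1)^k (C(2p, p − k·2^{n-1}) − C(2p, p − (k+1)·2^{n-1})). In particular the left-hand side is an integer. -/
open Finset Complex

lemma A_pair (N M : ℕ) (hNM : N = 2*M) (hM : 0 < M) (u : ℂ)
    (hu : IsPrimitiveRoot u (2*N)) (m : ℤ) :
    (∑ i ∈ Finset.Icc 1 M, u ^ ((2*(i:ℤ)-1)*m)) + (∑ i ∈ Finset.Icc 1 M, u ^ ((2*(i:ℤ)-1)*(-m)))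
      = if (N:ℤ) ∣ m then (2*M : ℂ) * (-1:ℂ) ^ (m / N) else 0 := by
  have hN : 0 < N := by omega
  have hu0 : u ≠ 0 := hu.ne_zero (by omega)
  have hzpow : ∀ l : ℤ, u ^ l = 1 ↔ ((2*N : ℕ) : ℤ) ∣ l := fun l => hu.zpow_eq_one_iff_dvd l
  have huN : u ^ (N:ℤ) = -1 := by
    have h2 : (u ^ (N:ℤ))^2 = 1 := by
      rw [← zpow_natCast (u ^ (N:ℤ)) 2, ← zpow_mul, hzpow]
      push_cast; exact ⟨1, by ring⟩
    rcases sq_eq_one_iff.mp h2 with h | h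
    · exfalso
      rw [hzpow] at h
      have := Int.le_of_dvd (by positivity) h
      push_cast at this; omega
    · exact h
  have hneg1 : ∀ a b : ℤ, a % 2 = b % 2 → (-1:ℂ)^a = (-1:ℂ)^b := by
    intro a b hab
    obtain ⟨c, hc⟩ : (2:ℤ) ∣ (a - b) := by omega
    have : a = 2*c + b := by omega
    rw [this, zpow_add₀ (by norm_num : (-1:ℂ) ≠ 0), zpow_mul]
    norm_num
  by_cases hdvd : (N:ℤ) ∣ m
  · rw [if_pos hdvd]
    obtain ⟨k, rfl⟩ := hdvd
    have hterm : ∀ s : ℤ, ∀ i ∈ Finset.Icc 1 M, u ^ ((2*(i:ℤ)-1)*((N:ℤ)*s)) = (-1:ℂ)^s := by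
      intro s i _
      rw [show (2*(i:ℤ)-1)*((N:ℤ)*s) = (N:ℤ) * ((2*(i:ℤ)-1)*s) by ring, zpow_mul, huN]
      refine hneg1 _ _ ?_
      have h2 : (2*(i:ℤ)-1)*s = 2*((i:ℤ)*s - s) + s := by ring
      omega
    have e1 : ∑ i ∈ Finset.Icc 1 M, u ^ ((2*(i:ℤ)-1)*((N:ℤ)*k)) = (M:ℂ) * (-1:ℂ)^k := by
      rw [Finset.sum_congr rfl (hterm k), Finset.sum_const, Nat.card_Icc,
        Nat.add_sub_cancel, nsmul_eq_mul]
    have e2 : ∑ i ∈ Finset.Icc 1 M, u ^ ((2*(i:ℤ)-1)*(-((N:ℤ)*k))) = (M:ℂ) * (-1:ℂ)^k := by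
      have : ∀ i ∈ Finset.Icc 1 M, u ^ ((2*(i:ℤ)-1)*(-((N:ℤ)*k))) = (-1:ℂ)^(-k) := by
        intro i hi
        rw [show (2*(i:ℤ)-1)*(-((N:ℤ)*k)) = (2*(i:ℤ)-1)*((N:ℤ)*(-k)) by ring]
        exact hterm (-k) i hi
      rw [Finset.sum_congr rfl this, Finset.sum_const, Nat.card_Icc,
        Nat.add_sub_cancel, nsmul_eq_mul, hneg1 (-k) k (by omega)]
    rw [e1, e2, Int.mul_ediv_cancel_left _ (by exact_mod_cast hN.ne')]
    ring
  · rw [if_neg hdvd]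
    have hx1 : u ^ (2*m) ≠ 1 := by
      rw [Ne, hzpow]; push_cast
      intro ⟨c, hc⟩
      exact hdvd ⟨c, by linarith⟩
    have key : ∀ s : ℤ, u ^ (2*s) ≠ 1 →
        ∑ i ∈ Finset.Icc 1 M, u ^ ((2*(i:ℤ)-1)*s)
          = u ^ s * (((u ^ (2*s)) ^ M - 1) / (u ^ (2*s) - 1)) := by
      intro s hx1'
      have h1 : ∀ i ∈ Finset.Icc 1 M, u ^ ((2*(i:ℤ)-1)*s) = u ^ (-s) * (u ^ (2*s)) ^ i := by
        intro i hi
        rw [← zpow_natCast (u ^ (2*s)) i, ← zpow_mul, ← zpow_add₀ hu0]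
        congr 1; ring
      rw [Finset.sum_congr rfl h1, ← Finset.mul_sum]
      have hre : ∑ i ∈ Finset.Icc 1 M, (u ^ (2*s)) ^ i
          = (u^(2*s)) * ∑ i ∈ Finset.range M, (u ^ (2*s)) ^ i := by
        rw [Finset.mul_sum, show Finset.Icc 1 M = Finset.Ico 1 (M+1) by rfl,
          Finset.sum_Ico_eq_sum_range]
        simp only [Nat.add_sub_cancel]
        apply Finset.sum_congr rfl
        intro t _
        rw [← pow_succ']
        congr 1
        omega
      rw [hre, geom_sum_eq hx1', ← mul_assoc, ← zpow_add₀ hu0]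
      congr 2
      ring
    have hx1'' : u ^ (2*(-m)) ≠ 1 := by
      intro h; apply hx1
      rw [← inv_eq_one, ← zpow_neg]; rw [← h]; ring_nf
    rw [key m hx1, key (-m) hx1'']
    have hXM : ∀ s : ℤ, (u ^ (2*s)) ^ M = (-1:ℂ)^s := by
      intro s
      rw [← zpow_natCast (u^(2*s)) M, ← zpow_mul]
      rw [show 2*s*(M:ℤ) = (N:ℤ)*s by push_cast [hNM]; ring, zpow_mul, huN]
    rw [hXM, hXM, hneg1 (-m) m (by omega)]
    have hum : u ^ m ≠ 0 := zpow_ne_zero m hu0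
    have hd : u ^ (2*m) - 1 ≠ 0 := sub_ne_zero.mpr hx1
    have hd' : u ^ (2*(-m)) - 1 ≠ 0 := sub_ne_zero.mpr hx1''
    have e3 : u ^ (2*m) = u^m * u^m := by rw [← zpow_add₀ hu0]; ring_nf
    have e1 : u ^ (2*(-m)) = (u^m * u^m)⁻¹ := by
      rw [← e3, ← zpow_neg]; congr 1; ring
    have e2 : u ^ (-m) = (u^m)⁻¹ := by rw [← zpow_neg]
    rw [e3] at hd
    rw [e1] at hd'
    rw [e1, e2, e3]
    have hinv : (u^m * u^m)⁻¹ - 1 ≠ 0 := hd'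
    have h3 : u ^ m - (u ^ m)^3 ≠ 0 := by
      have h4 : u ^ m - (u^m)^3 = -(u^m * (u^m*u^m - 1)) := by ring
      rw [h4]
      exact neg_ne_zero.mpr (mul_ne_zero hum hd)
    have ht : (u^m - (u^m)^3) * (u^m - (u^m)^3)⁻¹ = 1 := mul_inv_cancel₀ h3
    field_simp
    rw [show (1:ℂ) - (u^m)^2 = -((u^m)^2 - 1) by ring, one_div_neg_eq_neg_one_div, add_neg_cancel, mul_zero]

lemma cos_pow (θ : ℝ) (p : ℕ) (w : ℂ) (hw : Complex.exp (2*θ*Complex.I) = w) :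
    ((2 * Real.cos θ : ℝ) : ℂ) ^ (2*p)
      = ∑ j ∈ Finset.range (2*p+1), (Nat.choose (2*p) j : ℂ) * w ^ ((j:ℤ) - p) := by
  have hw0 : w ≠ 0 := hw ▸ Complex.exp_ne_zero _
  set e : ℂ := Complex.exp (θ*Complex.I) with he
  have he0 : e ≠ 0 := Complex.exp_ne_zero _
  have h2cos : ((2 * Real.cos θ : ℝ) : ℂ) = e + e⁻¹ := by
    rw [Complex.ofReal_mul, Complex.ofReal_cos, Complex.cos]
    rw [he, ← Complex.exp_neg]
    push_cast
    ring_nf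
  have hew : e * e = w := by
    rw [he, ← Complex.exp_add, ← hw]
    congr 1
    ring
  rw [h2cos]
  have h1 : e + e⁻¹ = e⁻¹ * (e*e + 1) := by field_simp
  rw [h1, mul_pow, add_pow]
  rw [Finset.mul_sum]
  apply Finset.sum_congr rfl
  intro j hj
  rw [one_pow, mul_one, hew]
  have h2 : (e⁻¹:ℂ)^(2*p) = w ^ (-(p:ℤ)) := by
    rw [← hew, ← sq, ← zpow_natCast e 2, ← zpow_mul, inv_pow,
      ← zpow_natCast e (2*p), ← zpow_neg]
    congr 1
    push_cast
    ring
  rw [h2, ← zpow_natCast w j,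
    show w ^ (-(p:ℤ)) * (w ^ ((j:ℤ)) * ((Nat.choose (2*p) j : ℂ))) =
      (Nat.choose (2*p) j : ℂ) * (w^(-(p:ℤ)) * w^((j:ℤ))) by ring,
    ← zpow_add₀ hw0, show -(p:ℤ) + (j:ℤ) = (j:ℤ) - p by ring]


lemma alt_sum (a : ℕ → ℂ) (K : ℕ) :
    ∑ k ∈ Finset.range (K+1), (-1:ℂ)^k * (a k - a (k+1))
      = a 0 + 2 * ∑ k ∈ Finset.Icc 1 K, (-1:ℂ)^k * a k + (-1:ℂ)^(K+1) * a (K+1) := by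
  induction K with
  | zero => simp; ring
  | succ K ih =>
    rw [Finset.sum_range_succ, ih, Finset.sum_Icc_succ_top (by omega)]
    ring

lemma comb (p N K : ℕ) (hN : 0 < N) (hp : 0 < p) (hK : K = p / N) :
    ∑ j ∈ Finset.range (2*p+1), (Nat.choose (2*p) j : ℂ) *
        (if (N:ℤ) ∣ ((j:ℤ) - p) then (-1:ℂ)^(((j:ℤ) - p)/(N:ℤ)) else 0)
      = ∑ k ∈ Finset.range (K+1), (-1:ℂ)^k *
          ((ichoose (2*p) ((p:ℤ) - k*N) : ℂ) - (ichoose (2*p) ((p:ℤ) - ((k:ℤ)+1)*N) : ℂ)) := by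
  set f : ℕ → ℂ := fun j => (Nat.choose (2*p) j : ℂ) *
      (if (N:ℤ) ∣ ((j:ℤ) - p) then (-1:ℂ)^(((j:ℤ) - p)/(N:ℤ)) else 0) with hf
  have hneg1 : ∀ a b : ℤ, a % 2 = b % 2 → (-1:ℂ)^a = (-1:ℂ)^b := by
    intro a b hab
    have h1 : a = 2*((a-b)/2) + b := by omega
    rw [h1, zpow_add₀ (by norm_num : (-1:ℂ) ≠ 0), zpow_mul]
    norm_num
  -- step A : value of f at p + k*N for k ≤ K
  have hval : ∀ k : ℕ, k ≤ K → f (p + k*N) = (-1:ℂ)^k * (Nat.choose (2*p) (p - k*N) : ℂ) := by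
    intro k hk
    have hkN : k*N ≤ p := by
      calc k*N ≤ (p/N)*N := by apply Nat.mul_le_mul_right; omega
      _ ≤ p := Nat.div_mul_le_self p N
    have hdvd : (N:ℤ) ∣ (((p + k*N : ℕ):ℤ) - p) := ⟨k, by push_cast; ring⟩
    rw [hf]
    simp only [if_pos hdvd]
    have hdivv : (((p + k*N : ℕ):ℤ) - p)/(N:ℤ) = k := by
      push_cast
      rw [show ((p:ℤ) + k*N - p) = (N:ℤ)*k by ring]
      exact Int.mul_ediv_cancel_left _ (by exact_mod_cast hN.ne')
    rw [hdivv, zpow_natCast]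
    have hsymm : Nat.choose (2*p) (p + k*N) = Nat.choose (2*p) (p - k*N) := by
      rw [show p - k*N = 2*p - (p + k*N) by omega]
      exact (Nat.choose_symm (by omega)).symm
    rw [hsymm]; ring
  -- step B : symmetry f (2p - j) = f j for j ≤ 2p
  have hsym : ∀ j, j ≤ 2*p → f (2*p - j) = f j := by
    intro j hj
    rw [hf]
    simp only
    have hc : Nat.choose (2*p) (2*p - j) = Nat.choose (2*p) j := Nat.choose_symm hj
    have hcast : (((2*p - j : ℕ):ℤ) - p) = -(((j:ℤ) - p)) := by
      push_cast [hj]; ring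
    rw [hc, hcast]
    congr 1
    by_cases hd : (N:ℤ) ∣ ((j:ℤ) - p)
    · rw [if_pos (by exact hd.neg_right), if_pos hd]
      obtain ⟨c, hc'⟩ := hd
      rw [hc', show -((N:ℤ)*c) = (N:ℤ)*(-c) by ring,
        Int.mul_ediv_cancel_left _ (by exact_mod_cast hN.ne'),
        Int.mul_ediv_cancel_left _ (by exact_mod_cast hN.ne')]
      exact hneg1 _ _ (by omega)
    · rw [if_neg (fun h => hd (by simpa using h.neg_right)), if_neg hd]
  -- step C : split the sum
  have hsplit : ∑ j ∈ Finset.range (2*p+1), f j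
      = f p + 2 * ∑ j ∈ Finset.Ico (p+1) (2*p+1), f j := by
    have h0 : Finset.range (2*p+1) = Finset.Ico 0 (2*p+1) := by
      rw [Finset.range_eq_Ico]
    rw [h0, ← Finset.sum_Ico_consecutive f (Nat.zero_le p) (by omega),
      Finset.sum_eq_sum_Ico_succ_bot (a := p) (b := 2*p+1) (by omega) f]
    have hrefl : ∑ j ∈ Finset.Ico 0 p, f j = ∑ j ∈ Finset.Ico (p+1) (2*p+1), f j := by
      apply Finset.sum_nbij' (fun j => 2*p - j) (fun j => 2*p - j)
      · intro a ha; simp only [Finset.mem_Ico] at *; omega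
      · intro a ha; simp only [Finset.mem_Ico] at *; omega
      · intro a ha; simp only [Finset.mem_Ico] at ha; omega
      · intro a ha; simp only [Finset.mem_Ico] at ha; omega
      · intro a ha
        simp only [Finset.mem_Ico] at ha
        exact (hsym a (by omega)).symm
    rw [hrefl]; ring
  -- step D : the Ico sum equals sum over k in Icc 1 K
  have hIco : ∑ j ∈ Finset.Ico (p+1) (2*p+1), f j
      = ∑ k ∈ Finset.Icc 1 K, (-1:ℂ)^k * (Nat.choose (2*p) (p - k*N) : ℂ) := by
    have hfil : ∑ j ∈ Finset.Ico (p+1) (2*p+1), f j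
        = ∑ j ∈ (Finset.Ico (p+1) (2*p+1)).filter (fun j : ℕ => (N:ℤ) ∣ ((j:ℤ) - p)), f j := by
      rw [Finset.sum_filter]
      apply Finset.sum_congr rfl
      intro j _
      by_cases hd : (N:ℤ) ∣ ((j:ℤ) - p)
      · rw [if_pos hd]
      · rw [if_neg hd, hf]; simp only [if_neg hd, mul_zero]
    rw [hfil]
    have hnat : ∀ a : ℕ, p + 1 ≤ a → ((N:ℤ) ∣ ((a:ℤ) - p)) → ∃ c : ℕ, 0 < c ∧ a - p = N * c := by
      intro a h1 hd
      have h2 : ((a - p : ℕ) : ℤ) = (a:ℤ) - p := by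
        push_cast [Nat.cast_sub (by omega : p ≤ a)]
        ring
      rw [← h2] at hd
      obtain ⟨c, hc⟩ := Int.ofNat_dvd.mp hd
      refine ⟨c, ?_, hc⟩
      rcases Nat.eq_zero_or_pos c with rfl | h
      · simp at hc; omega
      · exact h
    apply Finset.sum_nbij' (fun j => (j - p)/N) (fun k => p + k*N)
    · intro a ha
      simp only [Finset.mem_filter, Finset.mem_Ico] at ha
      obtain ⟨⟨h1, h2⟩, hd⟩ := ha
      obtain ⟨c, hc0, hc⟩ := hnat a h1 hd
      simp only [Finset.mem_Icc, hc, Nat.mul_div_cancel_left _ hN]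
      refine ⟨hc0, ?_⟩
      rw [hK]
      refine Nat.le_div_iff_mul_le hN |>.mpr ?_
      rw [mul_comm]
      omega
    · intro k hk
      simp only [Finset.mem_Icc] at hk
      have hkN : k*N ≤ p := by
        calc k*N ≤ (p/N)*N := by apply Nat.mul_le_mul_right; omega
        _ ≤ p := Nat.div_mul_le_self p N
      simp only [Finset.mem_filter, Finset.mem_Ico]
      refine ⟨⟨by nlinarith [hk.1], by omega⟩, ⟨k, by push_cast; ring⟩⟩
    · intro a ha
      simp only [Finset.mem_filter, Finset.mem_Ico] at ha
      obtain ⟨⟨h1, h2⟩, hd⟩ := ha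
      obtain ⟨c, hc0, hc⟩ := hnat a h1 hd
      rw [hc, Nat.mul_div_cancel_left _ hN, mul_comm]
      omega
    · intro k hk
      rw [Nat.add_sub_cancel_left, Nat.mul_div_cancel _ hN]
    · intro a ha
      simp only [Finset.mem_filter, Finset.mem_Ico] at ha
      obtain ⟨⟨h1, h2⟩, hd⟩ := ha
      obtain ⟨c, hc0, hc⟩ := hnat a h1 hd
      have hle : (a-p)/N ≤ K := by
        rw [hc, Nat.mul_div_cancel_left _ hN, hK]
        refine Nat.le_div_iff_mul_le hN |>.mpr ?_
        rw [mul_comm]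
        omega
      have hv := hval ((a-p)/N) hle
      rw [← hv]
      congr 1
      rw [hc, Nat.mul_div_cancel_left _ hN, mul_comm]
      omega
  -- step E : RHS via telescoping
  have hic : ∀ k : ℕ, k ≤ K → (ichoose (2*p) ((p:ℤ) - k*N) : ℂ) = (Nat.choose (2*p) (p - k*N) : ℂ) := by
    intro k hk
    have hkN : k*N ≤ p := by
      calc k*N ≤ (p/N)*N := by apply Nat.mul_le_mul_right; omega
      _ ≤ p := Nat.div_mul_le_self p N
    rw [ichoose, if_neg (by omega)]
    have ht : ((p:ℤ) - (k:ℤ)*(N:ℤ)).toNat = p - k*N := by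
      have : ((k:ℤ))*(N:ℤ) = ((k*N : ℕ) : ℤ) := by push_cast; ring
      rw [this]
      omega
    rw [ht]
  have hrhs : ∑ k ∈ Finset.range (K+1), (-1:ℂ)^k *
        ((ichoose (2*p) ((p:ℤ) - k*N) : ℂ) - (ichoose (2*p) ((p:ℤ) - ((k:ℤ)+1)*N) : ℂ))
      = (Nat.choose (2*p) p : ℂ) + 2 * ∑ k ∈ Finset.Icc 1 K, (-1:ℂ)^k * (Nat.choose (2*p) (p - k*N) : ℂ) := by
    have ha : ∀ k : ℕ, (ichoose (2*p) ((p:ℤ) - ((k:ℤ)+1)*N) : ℂ) = (ichoose (2*p) ((p:ℤ) - (k+1:ℕ)*N) : ℂ) := by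
      intro k; norm_cast
    calc ∑ k ∈ Finset.range (K+1), (-1:ℂ)^k *
          ((ichoose (2*p) ((p:ℤ) - k*N) : ℂ) - (ichoose (2*p) ((p:ℤ) - ((k:ℤ)+1)*N) : ℂ))
        = ∑ k ∈ Finset.range (K+1), (-1:ℂ)^k *
          ((fun k : ℕ => (ichoose (2*p) ((p:ℤ) - k*N) : ℂ)) k - (fun k : ℕ => (ichoose (2*p) ((p:ℤ) - k*N) : ℂ)) (k+1)) := by
          apply Finset.sum_congr rfl; intro k _; rw [ha]
      _ = _ := by
          rw [alt_sum]
          have hpK : p < (K+1)*N := by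
            rw [hK]
            exact (Nat.div_lt_iff_lt_mul hN).mp (by omega)
          have hz : (ichoose (2*p) ((p:ℤ) - ((K+1:ℕ):ℤ)*N) : ℂ) = 0 := by
            rw [ichoose, if_pos]
            · norm_num
            · have h5 : ((K+1:ℕ):ℤ) * N = (((K+1)*N : ℕ) : ℤ) := by push_cast; ring
              rw [h5]
              omega
          have e0 : (ichoose (2*p) ((p:ℤ) - ((0:ℕ):ℤ)*N) : ℂ) = (Nat.choose (2*p) p : ℂ) := by
            rw [ichoose, if_neg (by simp)]
            congr 2
            simp
          rw [hz, e0]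
          have esum : ∑ k ∈ Finset.Icc 1 K, (-1:ℂ)^k * (ichoose (2*p) ((p:ℤ) - (k:ℤ)*N) : ℂ)
              = ∑ k ∈ Finset.Icc 1 K, (-1:ℂ)^k * (Nat.choose (2*p) (p - k*N) : ℂ) := by
            apply Finset.sum_congr rfl
            intro k hk
            simp only [Finset.mem_Icc] at hk
            rw [hic k hk.2]
          rw [esum]
          ring
  rw [hsplit, hIco, hrhs]
  have hfp : f p = (Nat.choose (2*p) p : ℂ) := by
    rw [hf]
    simp only
    rw [if_pos (by simp : (N:ℤ) ∣ ((p:ℤ) - p))]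
    rw [show ((p:ℤ) - p) = 0 by ring]
    simp
  rw [hfp]

theorem stmt_14 (n p : ℕ) (hn : 2 ≤ n) (hp : 1 ≤ p) :
    (1 / (2 : ℝ) ^ (n - 2)) *
        ∑ i ∈ Finset.Icc 1 (2 ^ (n - 2)),
          (2 * Real.cos (((2 * i - 1 : ℕ) : ℝ) * Real.pi / 2 ^ n)) ^ (2 * p)
      = ∑ k ∈ Finset.range (p / 2 ^ (n - 1) + 1),
          (-1 : ℝ) ^ k *
            ((ichoose (2 * p) ((p : ℤ) - k * 2 ^ (n - 1)) : ℝ)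
              - (ichoose (2 * p) ((p : ℤ) - ((k : ℤ) + 1) * 2 ^ (n - 1)) : ℝ)) := by
  set N : ℕ := 2^(n-1) with hN
  set M : ℕ := 2^(n-2) with hM
  have hNM : N = 2*M := by rw [hN, hM, show n-1 = (n-2)+1 by omega]; ring
  have hMpos : 0 < M := Nat.pow_pos (by norm_num)
  have hNpos : 0 < N := by omega
  set K : ℕ := p / N with hK
  set u : ℂ := Complex.exp (2*Real.pi*Complex.I/((2*N : ℕ):ℂ)) with hu_def
  have hu : IsPrimitiveRoot u (2*N) := Complex.isPrimitiveRoot_exp _ (by omega)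
  have hu0 : u ≠ 0 := Complex.exp_ne_zero _
  have hcastN : ((2*N : ℕ):ℂ) = 2^n := by
    have h1 : (2:ℂ)^n = 2^(n-1)*2 := by
      rw [← pow_succ]
      congr 1
      omega
    push_cast [hN]
    rw [h1]
    ring
  set A : ℤ → ℂ := fun m => ∑ i ∈ Finset.Icc 1 M, u ^ ((2*(i:ℤ)-1)*m) with hA
  have key : ∀ i ∈ Finset.Icc 1 M,
      ((2 * Real.cos (((2 * i - 1 : ℕ) : ℝ) * Real.pi / 2 ^ n) : ℝ) : ℂ) ^ (2*p)
        = ∑ j ∈ Finset.range (2*p+1), (Nat.choose (2*p) j : ℂ) * u ^ ((2*(i:ℤ)-1)*((j:ℤ)-p)) := by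
    intro i hi
    simp only [Finset.mem_Icc] at hi
    have hw : Complex.exp (2*(((2 * i - 1 : ℕ) : ℝ) * Real.pi / 2 ^ n : ℝ)*Complex.I)
        = u ^ (2*i-1) := by
      rw [hu_def, ← Complex.exp_nat_mul]
      congr 1
      rw [show ((2*N:ℕ):ℂ) = 2^n from hcastN]
      have h2n : ((2:ℂ))^n ≠ 0 := pow_ne_zero _ two_ne_zero
      push_cast [Nat.cast_sub (by omega : 1 ≤ 2*i)]
      field_simp
    rw [cos_pow _ p (u^(2*i-1)) hw]
    apply Finset.sum_congr rfl
    intro j _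
    congr 1
    rw [← zpow_natCast u (2*i-1), ← zpow_mul]
    congr 1
    push_cast [Nat.cast_sub (by omega : 1 ≤ 2*i)]
    ring
  set S : ℝ := ∑ i ∈ Finset.Icc 1 M,
      (2 * Real.cos (((2 * i - 1 : ℕ) : ℝ) * Real.pi / 2 ^ n)) ^ (2*p) with hS_def
  have hS : (S : ℂ) = ∑ j ∈ Finset.range (2*p+1), (Nat.choose (2*p) j : ℂ) * A ((j:ℤ)-p) := by
    rw [hS_def, Complex.ofReal_sum]
    rw [Finset.sum_congr rfl (fun i hi => by
      rw [Complex.ofReal_pow, key i hi])]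
    rw [Finset.sum_comm]
    apply Finset.sum_congr rfl
    intro j _
    rw [hA, Finset.mul_sum]
  have hrefl : ∑ j ∈ Finset.range (2*p+1), (Nat.choose (2*p) j : ℂ) * A ((j:ℤ)-p)
      = ∑ j ∈ Finset.range (2*p+1), (Nat.choose (2*p) j : ℂ) * A (-((j:ℤ)-p)) := by
    rw [← Finset.sum_range_reflect]
    apply Finset.sum_congr rfl
    intro j hj
    simp only [Finset.mem_range] at hj
    rw [show 2*p+1-1-j = 2*p-j by omega]
    rw [Nat.choose_symm (by omega : j ≤ 2*p)]
    congr 2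
    push_cast [Nat.cast_sub (by omega : j ≤ 2*p)]
    ring
  have hdouble : (S:ℂ) + (S:ℂ) = (2*M:ℂ) * ∑ j ∈ Finset.range (2*p+1), (Nat.choose (2*p) j : ℂ) *
      (if (N:ℤ) ∣ ((j:ℤ) - p) then (-1:ℂ)^(((j:ℤ) - p)/(N:ℤ)) else 0) := by
    rw [hS]
    nth_rewrite 2 [hrefl]
    rw [← Finset.sum_add_distrib, Finset.mul_sum]
    apply Finset.sum_congr rfl
    intro j _
    rw [← mul_add]
    simp only [hA]
    rw [A_pair N M hNM hMpos u hu ((j:ℤ)-p)]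
    by_cases hd : (N:ℤ) ∣ ((j:ℤ) - p)
    · rw [if_pos hd, if_pos hd]; ring
    · rw [if_neg hd, if_neg hd]; ring
  have hT := comb p N K hNpos (by omega) hK
  have hSM : (S:ℂ) = (M:ℂ) * ∑ k ∈ Finset.range (K+1), (-1:ℂ)^k *
      ((ichoose (2*p) ((p:ℤ) - k*N) : ℂ) - (ichoose (2*p) ((p:ℤ) - ((k:ℤ)+1)*N) : ℂ)) := by
    rw [← hT]
    have h2 : (2:ℂ) ≠ 0 := by norm_num
    apply mul_left_cancel₀ h2
    rw [show (2:ℂ) * ((S:ℂ)) = (S:ℂ) + (S:ℂ) by ring, hdouble]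
    ring
  -- conclude
  rw [← Complex.ofReal_inj]
  push_cast
  rw [hSM]
  have hMC : (M:ℂ) = 2^(n-2) := by rw [hM]; push_cast; ring
  rw [hMC, ← mul_assoc]
  rw [show (1/(2:ℂ)^(n-2)) * (2:ℂ)^(n-2) = 1 by
    field_simp]
  rw [one_mul]
  apply Finset.sum_congr rfl
  intro k _
  have e1 : (p:ℤ) - k*(N:ℤ) = (p:ℤ) - k*2^(n-1) := by rw [hN]; push_cast; ring
  have e2 : (p:ℤ) - ((k:ℤ)+1)*(N:ℤ) = (p:ℤ) - ((k:ℤ)+1)*2^(n-1) := by rw [hN]; push_cast; ring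
  rw [e1, e2]
end

section
/- For positive integers n and p, ∑_{k=1}^{⌊(n-1)/2⌋} cos^{2p}(kπ/n) = −1/2 + (n/2^{2p+1}) · ∑_{k=−⌊p/n⌋}^{⌊p/n⌋} C(2p, p + kn). -/
open Complex Finset

lemma root_eq_one_iff (n : ℕ) (hn : 0 < n) (m : ℤ) :
    Complex.exp (2 * Real.pi * Complex.I * m / n) = 1 ↔ (n:ℤ) ∣ m := by
  have hn' : (n:ℂ) ≠ 0 := Nat.cast_ne_zero.mpr hn.ne'
  have hpi : (Real.pi:ℂ) ≠ 0 := by exact_mod_cast Real.pi_ne_zero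
  have h2 : (2 * (Real.pi:ℂ) * Complex.I) ≠ 0 := by
    simp [hpi, Complex.I_ne_zero]
  rw [Complex.exp_eq_one_iff]
  constructor
  · rintro ⟨z, hz⟩
    have hz' : ((m:ℂ)/n) * (2 * Real.pi * Complex.I) = (z:ℂ) * (2 * Real.pi * Complex.I) := by
      rw [← hz]; ring
    have h3 : (m:ℂ) = z * n := by
      have := mul_right_cancel₀ h2 hz'
      field_simp at this
      exact this.trans (mul_comm _ _)
    exact ⟨z, by exact_mod_cast h3.trans (mul_comm _ _)⟩
  · rintro ⟨c, rfl⟩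
    refine ⟨c, ?_⟩
    push_cast
    field_simp

lemma root_sum (n : ℕ) (hn : 0 < n) (m : ℤ) :
    ∑ k ∈ Finset.range n, Complex.exp (2 * Real.pi * Complex.I * m / n) ^ k
      = if (n:ℤ) ∣ m then (n:ℂ) else 0 := by
  set w := Complex.exp (2 * Real.pi * Complex.I * m / n) with hw
  have hn' : (n:ℂ) ≠ 0 := Nat.cast_ne_zero.mpr hn.ne'
  have hwn : w ^ n = 1 := by
    rw [hw, ← Complex.exp_nat_mul]
    have : (n:ℂ) * (2 * Real.pi * Complex.I * m / n) = m * (2 * Real.pi * Complex.I) := by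
      field_simp
    rw [this]
    exact_mod_cast Complex.exp_int_mul_two_pi_mul_I m
  by_cases hd : (n:ℤ) ∣ m
  · have hw1 : w = 1 := (root_eq_one_iff n hn m).mpr hd
    simp [if_pos hd, hw1]
  · rw [if_neg hd]
    have hw1 : w ≠ 1 := fun h => hd ((root_eq_one_iff n hn m).mp h)
    rw [geom_sum_eq hw1, hwn]
    simp

lemma cos_pow_expand (n p k : ℕ) (hn : 0 < n) :
    ((Real.cos ((k:ℝ) * Real.pi / n) : ℂ)) ^ (2*p)
      = (1/4^p) * ∑ j ∈ Finset.range (2*p+1),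
          (Complex.exp (2 * Real.pi * Complex.I * ((j:ℤ) - p) / n)) ^ k * ((2*p).choose j : ℂ) := by
  have hn' : (n:ℂ) ≠ 0 := Nat.cast_ne_zero.mpr hn.ne'
  set θ : ℂ := (((k:ℝ) * Real.pi / n : ℝ) : ℂ) with hθ
  have hcos : ((Real.cos ((k:ℝ) * Real.pi / n) : ℂ)) = (Complex.exp (θ * I) + Complex.exp (-θ * I)) / 2 := by
    rw [Complex.ofReal_cos, ← Complex.two_cos]; ring
  rw [hcos, div_pow]
  have h4 : ((2:ℂ))^(2*p) = 4^p := by rw [pow_mul]; norm_num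
  rw [h4, add_pow]
  rw [Finset.mul_sum, Finset.sum_div]
  apply Finset.sum_congr rfl
  intro j hj
  rw [Finset.mem_range, Nat.lt_succ_iff] at hj
  have he : Complex.exp (θ * I) ^ j * Complex.exp (-θ * I) ^ (2*p - j)
      = (Complex.exp (2 * Real.pi * Complex.I * ((j:ℤ) - p) / n)) ^ k := by
    rw [← Complex.exp_nat_mul, ← Complex.exp_nat_mul, ← Complex.exp_nat_mul, ← Complex.exp_add]
    congr 1
    rw [hθ]
    push_cast [hj]
    field_simp
    ring
  rw [he]
  ring

lemma parity_split (n p : ℕ) (hn : 1 ≤ n) (hp : 1 ≤ p) :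
    ∑ k ∈ Finset.range n, Real.cos ((k:ℝ) * Real.pi / n) ^ (2*p)
      = 1 + 2 * ∑ k ∈ Finset.Icc 1 ((n-1)/2), Real.cos ((k:ℝ) * Real.pi / n) ^ (2*p) := by
  set f : ℕ → ℝ := fun k => Real.cos ((k:ℝ) * Real.pi / n) ^ (2*p) with hf
  have hn' : (n:ℝ) ≠ 0 := Nat.cast_ne_zero.mpr (by omega)
  have hrefl : ∀ k, k ≤ n → f (n - k) = f k := by
    intro k hk
    simp only [hf]
    have hc : ((n - k : ℕ) : ℝ) = (n:ℝ) - k := by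
      rw [Nat.cast_sub hk]
    rw [hc]
    have harg : ((n:ℝ) - k) * Real.pi / n = Real.pi - (k:ℝ) * Real.pi / n := by
      field_simp
    rw [harg, Real.cos_pi_sub, Even.neg_pow ⟨p, by ring⟩]
  have h0 : f 0 = 1 := by simp [hf]
  set m := (n-1)/2 with hm
  have hstep1 : ∑ k ∈ Finset.range n, f k = f 0 + ∑ k ∈ Finset.Ico 1 n, f k := by
    rw [Finset.range_eq_Ico, Finset.sum_eq_sum_Ico_succ_bot (by omega)]
  have hsplit : ∑ k ∈ Finset.Ico 1 n, f k
      = ∑ k ∈ Finset.Ico 1 (m+1), f k + ∑ k ∈ Finset.Ico (m+1) n, f k := by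
    rw [Finset.sum_Ico_consecutive _ (by omega) (by omega)]
  have hrefl2 : ∑ k ∈ Finset.Ico (m+1) n, f k = ∑ k ∈ Finset.Ico 1 (n - m), f k := by
    refine Finset.sum_nbij' (fun j => n - j) (fun j => n - j) ?_ ?_ ?_ ?_ ?_
    · intro j hj; simp only [Finset.mem_Ico] at hj ⊢; omega
    · intro j hj; simp only [Finset.mem_Ico] at hj ⊢; omega
    · intro j hj; simp only [Finset.mem_Ico] at hj ⊢; omega
    · intro j hj; simp only [Finset.mem_Ico] at hj ⊢; omega
    · intro j hj
      rw [Finset.mem_Ico] at hj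
      exact (hrefl j (by omega)).symm
  have hIcc : Finset.Icc 1 m = Finset.Ico 1 (m+1) := by
    rw [Finset.Ico_add_one_right_eq_Icc]
  rw [hstep1, hsplit, hrefl2, h0, hIcc]
  rcases Nat.even_or_odd n with he | ho
  · obtain ⟨c, hc⟩ := he
    have hnm : n - m = m + 2 := by omega
    have hmid : f (m+1) = 0 := by
      simp only [hf]
      have : ((m+1:ℕ):ℝ) * Real.pi / n = Real.pi / 2 := by
        have h1 : (n:ℝ) = 2 * ((m:ℝ) + 1) := by
          have : n = 2*(m+1) := by omega
          rw [this]; push_cast; ring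
        rw [h1]; push_cast
        field_simp
      rw [this, Real.cos_pi_div_two]
      exact zero_pow (by omega)
    rw [hnm, Finset.sum_Ico_succ_top (by omega : 1 ≤ m+1), hmid]
    ring
  · obtain ⟨c, hc⟩ := ho
    have hnm : n - m = m + 1 := by omega
    rw [hnm]
    ring


lemma reindex (n p : ℕ) (hn : 0 < n) :
    ∑ j ∈ Finset.range (2*p+1), (if (n:ℤ) ∣ ((j:ℤ) - p) then ((2*p).choose j) else 0)
      = ∑ k ∈ Finset.Icc (-((p / n : ℕ) : ℤ)) ((p / n : ℕ) : ℤ), ichoose (2*p) ((p:ℤ) + k*n) := by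
  rw [← Finset.sum_filter]
  have hn' : (0:ℤ) < n := by exact_mod_cast hn
  refine Finset.sum_nbij' (fun j => ((j:ℤ) - p) / n) (fun k => ((p:ℤ) + k*n).toNat) ?_ ?_ ?_ ?_ ?_
  · intro j hj
    simp only [Finset.mem_filter, Finset.mem_range] at hj
    obtain ⟨hj1, c, hc⟩ := hj
    have hc' : (j:ℤ) - p = c * n := by rw [hc]; ring
    have hcv : ((j:ℤ) - p)/n = c := by rw [hc]; exact Int.mul_ediv_cancel_left c hn'.ne'
    beta_reduce
    rw [hcv, Finset.mem_Icc]
    have hq : ((p / n : ℕ) : ℤ) = (p:ℤ) / n := Int.natCast_div p n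
    constructor
    · rw [neg_le, hq, Int.le_ediv_iff_mul_le hn']
      have : (j:ℤ) ≥ 0 := Int.natCast_nonneg j
      nlinarith [hc]
    · rw [hq, Int.le_ediv_iff_mul_le hn']
      have : (j:ℤ) ≤ 2*p := by exact_mod_cast Nat.lt_succ_iff.mp hj1
      nlinarith [hc]
  · intro k hk
    rw [Finset.mem_Icc] at hk
    have h1 : -(p:ℤ) ≤ k * n := by
      have := hk.1
      have h2 : ((p/n:ℕ):ℤ) * n ≤ p := by exact_mod_cast Nat.div_mul_le_self p n
      nlinarith
    have h2 : k * n ≤ p := by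
      have := hk.2
      have h2 : ((p/n:ℕ):ℤ) * n ≤ p := by exact_mod_cast Nat.div_mul_le_self p n
      nlinarith
    simp only [Finset.mem_filter, Finset.mem_range]
    have hnn : (0:ℤ) ≤ (p:ℤ) + k*n := by linarith
    constructor
    · have : ((p:ℤ) + k*n).toNat ≤ 2*p := by omega
      omega
    · refine ⟨k, ?_⟩
      have : ((((p:ℤ) + k*n).toNat : ℤ)) = (p:ℤ) + k*n := Int.toNat_of_nonneg hnn
      rw [this]; ring
  · intro j hj
    simp only [Finset.mem_filter, Finset.mem_range] at hj
    obtain ⟨hj1, c, hc⟩ := hj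
    have hc' : (j:ℤ) - p = c * n := by rw [hc]; ring
    have hcv : ((j:ℤ) - p)/n = c := by rw [hc]; exact Int.mul_ediv_cancel_left c hn'.ne'
    beta_reduce
    rw [hcv]
    omega
  · intro k hk
    rw [Finset.mem_Icc] at hk
    have h2 : ((p/n:ℕ):ℤ) * n ≤ p := by exact_mod_cast Nat.div_mul_le_self p n
    have hnn : (0:ℤ) ≤ (p:ℤ) + k*n := by nlinarith [hk.1]
    have h3 : ((((p:ℤ) + k*n).toNat : ℤ)) = (p:ℤ) + k*n := Int.toNat_of_nonneg hnn
    beta_reduce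
    rw [show ((((p:ℤ) + k*n).toNat : ℤ) - p) = k * n by omega]
    exact Int.mul_ediv_cancel k hn'.ne'
  · intro j hj
    simp only [Finset.mem_filter, Finset.mem_range] at hj
    obtain ⟨hj1, c, hc⟩ := hj
    have hc' : (j:ℤ) - p = c * n := by rw [hc]; ring
    have hcv : ((j:ℤ) - p)/n = c := by rw [hc]; exact Int.mul_ediv_cancel_left c hn'.ne'
    beta_reduce
    rw [hcv]
    unfold ichoose
    have hnn : ¬ ((p:ℤ) + c * n < 0) := by omega
    rw [if_neg hnn]
    congr 1
    omega
lemma sum_cos_pow (n p : ℕ) (hn : 0 < n) :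
    ∑ k ∈ Finset.range n, Real.cos ((k:ℝ) * Real.pi / n) ^ (2*p)
      = (n:ℝ)/4^p * ∑ k ∈ Finset.Icc (-((p / n : ℕ) : ℤ)) ((p / n : ℕ) : ℤ),
          (ichoose (2*p) ((p:ℤ) + k*n) : ℝ) := by
  apply Complex.ofReal_injective
  rw [Complex.ofReal_sum]
  simp only [Complex.ofReal_pow]
  calc ∑ k ∈ Finset.range n, ((Real.cos ((k:ℝ) * Real.pi / n) : ℂ)) ^ (2*p)
      = ∑ k ∈ Finset.range n, (1/4^p : ℂ) * ∑ j ∈ Finset.range (2*p+1),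
          (Complex.exp (2 * Real.pi * Complex.I * ((j:ℤ) - p) / n)) ^ k * ((2*p).choose j : ℂ) :=
        Finset.sum_congr rfl (fun k _ => cos_pow_expand n p k hn)
    _ = (1/4^p : ℂ) * ∑ j ∈ Finset.range (2*p+1),
          (∑ k ∈ Finset.range n, (Complex.exp (2 * Real.pi * Complex.I * ((j:ℤ) - p) / n)) ^ k)
            * ((2*p).choose j : ℂ) := by
        rw [← Finset.mul_sum, Finset.sum_comm]
        congr 1
        exact Finset.sum_congr rfl (fun j _ => (Finset.sum_mul _ _ _).symm)
    _ = (1/4^p : ℂ) * ∑ j ∈ Finset.range (2*p+1),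
          ((n:ℂ) * ((if (n:ℤ) ∣ ((j:ℤ) - p) then ((2*p).choose j) else 0 : ℕ) : ℂ)) := by
        congr 1
        refine Finset.sum_congr rfl (fun j _ => ?_)
        have hr := root_sum n hn ((j:ℤ) - p)
        push_cast at hr ⊢
        rw [hr]
        by_cases hd : (n:ℤ) ∣ ((j:ℤ) - p) <;> simp [hd]
    _ = (n:ℂ)/4^p * ((∑ j ∈ Finset.range (2*p+1),
          (if (n:ℤ) ∣ ((j:ℤ) - p) then ((2*p).choose j) else 0) : ℕ) : ℂ) := by
        rw [← Finset.mul_sum, Nat.cast_sum]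
        ring
    _ = (n:ℂ)/4^p * ∑ k ∈ Finset.Icc (-((p / n : ℕ) : ℤ)) ((p / n : ℕ) : ℤ),
          ((ichoose (2*p) ((p:ℤ) + k*n) : ℝ) : ℂ) := by
        rw [reindex n p hn]
        push_cast
        ring
    _ = _ := by push_cast; ring

theorem stmt_15 (n p : ℕ) (hn : 1 ≤ n) (hp : 1 ≤ p) :
    ∑ k ∈ Finset.Icc 1 ((n - 1) / 2), (Real.cos ((k : ℝ) * Real.pi / n)) ^ (2 * p)
      = -1 / 2 + ((n : ℝ) / 2 ^ (2 * p + 1)) *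
          ∑ k ∈ Finset.Icc (-((p / n : ℕ) : ℤ)) ((p / n : ℕ) : ℤ),
            (ichoose (2 * p) ((p : ℤ) + k * n) : ℝ) := by
  have h1 := parity_split n p hn hp
  have h2 := sum_cos_pow n p (by omega)
  have hS := h1.symm.trans h2
  have hpow : (2:ℝ)^(2*p+1) = 2 * 4^p := by
    rw [pow_succ, pow_mul]; norm_num; ring
  rw [hpow]
  linear_combination (1/2 : ℝ) * hS
end

section
/- For a complex number s with Re(s) > 1, ζ(s) = lim_{n→∞} (2^s π^s/(2^s − 1)) · ∑_{i=1}^{2^{n-2}} 1/(2^n · sin((2i−1)π/2^n))^s. -/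
open Filter Topology

set_option maxHeartbeats 1000000

private lemma aux_tendsto_sin (a : ℝ) (ha : 0 < a) :
    Tendsto (fun n : ℕ => (2:ℝ)^n * Real.sin (a / 2^n)) atTop (𝓝 a) := by
  have h2 : ∀ n : ℕ, (0:ℝ) < 2 ^ n := fun n => by positivity
  have h0 : Tendsto (fun n : ℕ => a / 2^n) atTop (𝓝[≠] (0:ℝ)) := by
    rw [tendsto_nhdsWithin_iff]
    constructor
    · have : Tendsto (fun n : ℕ => ((1:ℝ)/2)^n) atTop (𝓝 0) :=
        tendsto_pow_atTop_nhds_zero_of_lt_one (by norm_num) (by norm_num)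
      have := this.const_mul a
      simpa [div_eq_mul_inv, mul_comm, ← inv_pow] using this
    · filter_upwards with n
      have := h2 n
      simp only [Set.mem_compl_iff, Set.mem_singleton_iff]
      positivity
  have hslope := hasDerivAt_iff_tendsto_slope.mp (Real.hasDerivAt_sin 0)
  rw [Real.cos_zero] at hslope
  have key := (hslope.comp h0).const_mul a
  rw [mul_one] at key
  refine key.congr fun n => ?_
  have hn := h2 n
  have ha0 := ha.ne'
  rw [Function.comp_apply, slope_def_field, Real.sin_zero, sub_zero, sub_zero]
  field_simp <;> ring

private lemma aux_odd_sum (s : ℂ) (hs : 1 < s.re) :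
    ∑' k : ℕ, 1 / ((2 * k + 1 : ℕ) : ℂ) ^ s
      = riemannZeta s - ((2:ℂ)^s)⁻¹ * riemannZeta s := by
  have hs0 : s ≠ 0 := by
    intro h; rw [h] at hs; norm_num at hs
  have hsum : Summable (fun n : ℕ => 1 / (n:ℂ)^s) := by
    rw [Complex.summable_one_div_nat_cpow]; exact hs
  have he : Summable (fun k : ℕ => 1 / ((2*k : ℕ):ℂ)^s) :=
    hsum.comp_injective (mul_right_injective₀ (two_ne_zero))
  have ho : Summable (fun k : ℕ => 1 / ((2*k+1 : ℕ):ℂ)^s) :=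
    hsum.comp_injective (fun a b h => by omega)
  have key := tsum_even_add_odd (f := fun n : ℕ => 1 / (n:ℂ)^s) he ho
  have heven : ∑' k : ℕ, 1 / ((2*k : ℕ):ℂ)^s = ((2:ℂ)^s)⁻¹ * ∑' k : ℕ, 1 / ((k:ℕ):ℂ)^s := by
    rw [← tsum_mul_left]
    refine tsum_congr fun k => ?_
    rcases Nat.eq_zero_or_pos k with rfl | hk
    · simp [Complex.zero_cpow hs0]
    · have : ((2*k : ℕ):ℂ) = ((2:ℝ):ℂ) * ((k:ℝ):ℂ) := by push_cast; ring
      rw [this, Complex.mul_cpow_ofReal_nonneg (by norm_num) (Nat.cast_nonneg k)]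
      push_cast
      rw [div_eq_mul_inv, one_div, mul_inv, one_mul]
  have hz : riemannZeta s = ∑' n : ℕ, 1 / (n : ℂ) ^ s := zeta_eq_tsum_one_div_nat_cpow hs
  rw [hz]
  push_cast at key heven ⊢
  linear_combination key - heven

private lemma aux_norm (s : ℂ) (x : ℝ) (hx : 0 < x) :
    ‖1 / ((x:ℂ))^s‖ = x ^ (-s.re) := by
  rw [norm_div, norm_one, Complex.norm_cpow_eq_rpow_re_of_pos hx,
    Real.rpow_neg hx.le, one_div]

noncomputable def tt (s : ℂ) (n i : ℕ) : ℂ :=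
  1 / (((2 ^ n * Real.sin (((2 * i - 1 : ℕ) : ℝ) * Real.pi / 2 ^ n) : ℝ) : ℂ) ^ s)

noncomputable def FF (s : ℂ) (n i : ℕ) : ℂ :=
  if i ∈ Finset.Icc 1 (2 ^ (n - 2)) then tt s n i else 0

noncomputable def GG (s : ℂ) (i : ℕ) : ℂ :=
  1 / (((((2 * i - 1 : ℕ) : ℝ)) * Real.pi : ℝ) : ℂ) ^ s

private lemma aux_pointwise (s : ℂ) (hs : 1 < s.re) (i : ℕ) :
    Tendsto (fun n => FF s n i) atTop (𝓝 (GG s i)) := by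
  have hs0 : s ≠ 0 := by intro h; rw [h] at hs; norm_num at hs
  rcases Nat.eq_zero_or_pos i with rfl | hi
  · have h1 : ∀ n : ℕ, FF s n 0 = 0 := fun n => if_neg (by simp)
    have h2 : GG s 0 = 0 := by
      simp [GG, Complex.zero_cpow hs0]
    rw [h2]
    simpa [h1] using (tendsto_const_nhds : Tendsto (fun _ : ℕ => (0:ℂ)) atTop (𝓝 0))
  · set a : ℝ := ((2 * i - 1 : ℕ) : ℝ) * Real.pi with ha_def
    have hc1 : (1:ℝ) ≤ ((2 * i - 1 : ℕ) : ℝ) := by exact_mod_cast Nat.one_le_iff_ne_zero.mpr (by omega)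
    have ha : 0 < a := by
      have := Real.pi_pos
      nlinarith
    have h1 := aux_tendsto_sin a ha
    have hcont : ContinuousAt (fun x : ℝ => 1 / ((x:ℂ))^s) a := by
      have hc2 : ContinuousAt (fun z : ℂ => z ^ s) ((a:ℝ):ℂ) :=
        continuousAt_cpow_const (Complex.ofReal_mem_slitPlane.mpr ha)
      have hc3 : ContinuousAt (fun x : ℝ => ((x:ℂ))^s) a :=
        hc2.comp Complex.continuous_ofReal.continuousAt
      refine continuousAt_const.div hc3 ?_
      intro h
      exact (Complex.ofReal_ne_zero.mpr ha.ne') ((Complex.cpow_eq_zero_iff _ _).mp h).1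
    have htt : Tendsto (fun n => tt s n i) atTop (𝓝 (GG s i)) := by
      have hthis := hcont.tendsto.comp h1
      have hfun : ∀ n : ℕ, tt s n i = 1 / ((((2:ℝ)^n * Real.sin (a / 2^n) : ℝ)):ℂ)^s := by
        intro n
        rw [tt, ha_def]
      have hGG : GG s i = 1 / (((a:ℝ)):ℂ)^s := by rw [GG, ha_def]
      rw [hGG]
      exact Tendsto.congr (fun n => (hfun n).symm) hthis
    have heq : ∀ᶠ n in atTop, FF s n i = tt s n i := by
      filter_upwards [eventually_ge_atTop (i+2)] with n hn
      refine if_pos (Finset.mem_Icc.mpr ⟨hi, ?_⟩)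
      calc i ≤ 2^i - 1 := by have := @Nat.lt_two_pow_self i; omega
      _ ≤ 2^(n-2) - 1 := by
          have : 2^i ≤ 2^(n-2) := Nat.pow_le_pow_right (by norm_num) (by omega)
          omega
      _ ≤ 2^(n-2) := Nat.sub_le _ _
    exact Tendsto.congr' (heq.mono fun n h => h.symm) htt

private lemma aux_bound (s : ℂ) (hs : 1 < s.re) :
    ∀ᶠ n in atTop, ∀ i : ℕ, ‖FF s n i‖ ≤ (2:ℝ)^(-s.re) * (i:ℝ)^(-s.re) := by
  have hπ := Real.pi_pos
  filter_upwards [eventually_ge_atTop 2] with n hn i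
  by_cases hi : i ∈ Finset.Icc 1 (2 ^ (n - 2))
  · obtain ⟨hi1, hi2⟩ := Finset.mem_Icc.mp hi
    rw [FF, if_pos hi]
    set c : ℝ := ((2 * i - 1 : ℕ) : ℝ) with hc_def
    have hc1 : (1:ℝ) ≤ c := by
      rw [hc_def]
      exact_mod_cast (show 1 ≤ 2 * i - 1 by omega)
    have hcle : c ≤ 2^(n-1) := by
      have h1 : 2 * i - 1 ≤ 2^(n-1) := by
        have : 2 * 2^(n-2) = 2^(n-1) := by
          rw [← pow_succ']
          congr 1
          omega
        omega
      rw [hc_def]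
      calc ((2*i-1:ℕ):ℝ) ≤ ((2^(n-1) : ℕ) : ℝ) := by exact_mod_cast h1
      _ = 2^(n-1) := by push_cast; ring
    set θ : ℝ := c * Real.pi / 2^n with hθ_def
    have hθ0 : 0 < θ := by positivity
    have h2n : (2:ℝ)^n = 2 * 2^(n-1) := by
      rw [← pow_succ']
      congr 1
      omega
    have hθle : θ ≤ Real.pi / 2 := by
      rw [hθ_def, div_le_div_iff₀ (by positivity) (by norm_num)]
      calc c * Real.pi * 2 ≤ 2^(n-1) * Real.pi * 2 := by nlinarith
      _ = Real.pi * 2^n := by rw [h2n]; ring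
    have hsin : 2 / Real.pi * θ ≤ Real.sin θ := Real.mul_le_sin hθ0.le hθle
    have hkey : (2:ℝ) * c ≤ 2^n * Real.sin θ := by
      have h3 : (2:ℝ)^n * (2 / Real.pi * θ) = 2 * c := by
        rw [hθ_def]
        field_simp
      calc (2:ℝ) * c = 2^n * (2 / Real.pi * θ) := h3.symm
      _ ≤ 2^n * Real.sin θ := by
          have : (0:ℝ) < 2^n := by positivity
          nlinarith
    have hic : (2:ℝ) * i ≤ 2 * c := by
      have : (i:ℝ) ≤ c := by
        rw [hc_def]
        exact_mod_cast (by omega : i ≤ 2 * i - 1)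
      linarith
    have hxpos : (0:ℝ) < 2^n * Real.sin θ := by
      have hipos : (0:ℝ) < 2 * i := by
        have : (1:ℝ) ≤ (i:ℝ) := by exact_mod_cast hi1
        linarith
      linarith
    rw [tt, aux_norm s _ hxpos]
    have hrhs : (2:ℝ)^(-s.re) * (i:ℝ)^(-s.re) = ((2:ℝ) * i)^(-s.re) := by
      rw [Real.mul_rpow (by norm_num) (Nat.cast_nonneg i)]
    rw [hrhs]
    have hipos : (0:ℝ) < 2 * i := by
      have : (1:ℝ) ≤ (i:ℝ) := by exact_mod_cast hi1
      linarith
    rw [Real.rpow_neg hxpos.le, Real.rpow_neg hipos.le]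
    refine inv_anti₀ (Real.rpow_pos_of_pos hipos _) ?_
    exact Real.rpow_le_rpow hipos.le (le_trans hic hkey) (by linarith)
  · rw [FF, if_neg hi]
    simp only [norm_zero]
    positivity

theorem stmt_18 (s : ℂ) (hs : 1 < s.re) :
    Tendsto (fun n : ℕ =>
        (2 : ℂ) ^ s * (Real.pi : ℂ) ^ s / ((2 : ℂ) ^ s - 1) *
          ∑ i ∈ Finset.Icc 1 (2 ^ (n - 2)),
            1 / (((2 ^ n * Real.sin (((2 * i - 1 : ℕ) : ℝ) * Real.pi / 2 ^ n) : ℝ) : ℂ) ^ s))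
      atTop (nhds (riemannZeta s)) := by
  have hs0 : s ≠ 0 := by intro h; rw [h] at hs; norm_num at hs
  have hπ := Real.pi_pos
  have hbound_sum : Summable (fun i : ℕ => (2:ℝ)^(-s.re) * (i:ℝ)^(-s.re)) :=
    (Real.summable_nat_rpow.mpr (by linarith)).mul_left _
  have main : Tendsto (fun n : ℕ => ∑' i : ℕ, FF s n i) atTop (𝓝 (∑' i : ℕ, GG s i)) :=
    tendsto_tsum_of_dominated_convergence hbound_sum (aux_pointwise s hs) (aux_bound s hs)
  -- value of tsum GG
  have hsum : Summable (fun n : ℕ => 1 / (n:ℂ)^s) := by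
    rw [Complex.summable_one_div_nat_cpow]; exact hs
  have hH : Summable (fun i : ℕ => 1 / ((2*i-1 : ℕ):ℂ)^s) :=
    hsum.comp_injective (fun a b h => by omega)
  have hGeq : ∀ i : ℕ, GG s i = (((Real.pi:ℝ):ℂ)^s)⁻¹ * (1 / ((2*i-1 : ℕ):ℂ)^s) := by
    intro i
    rcases Nat.eq_zero_or_pos i with rfl | hi
    · simp [GG, Complex.zero_cpow hs0]
    · have h1 : ((((2*i-1:ℕ):ℝ) * Real.pi : ℝ):ℂ)
          = (((2*i-1:ℕ):ℝ):ℂ) * ((Real.pi:ℝ):ℂ) := by push_cast; ring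
      rw [GG, h1, Complex.mul_cpow_ofReal_nonneg (Nat.cast_nonneg _) hπ.le]
      rw [one_div, mul_inv, one_div, mul_comm]
      norm_cast
  have hGsum : ∑' i : ℕ, GG s i
      = (((Real.pi:ℝ):ℂ)^s)⁻¹ * (riemannZeta s - ((2:ℂ)^s)⁻¹ * riemannZeta s) := by
    rw [tsum_congr hGeq, tsum_mul_left]
    congr 1
    rw [Summable.tsum_eq_zero_add hH]
    have h0 : (1 : ℂ) / ((2*0-1 : ℕ):ℂ)^s = 0 := by
      norm_num [Complex.zero_cpow hs0]
    rw [h0, zero_add]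
    rw [show (fun i : ℕ => 1 / ((2*(i+1)-1 : ℕ):ℂ)^s) = fun i : ℕ => 1 / ((2*i+1 : ℕ):ℂ)^s from
      funext fun i => by rw [show 2*(i+1)-1 = 2*i+1 from by omega]]
    exact aux_odd_sum s hs
  -- nonvanishing facts
  have h2pos : (1:ℝ) < (2:ℝ) ^ s.re := by
    calc (1:ℝ) = 2 ^ (0:ℝ) := by norm_num
    _ < 2 ^ s.re := Real.rpow_lt_rpow_of_exponent_lt (by norm_num) (by linarith)
  have h2s : (2:ℂ)^s ≠ 0 := by
    intro h
    exact (two_ne_zero) ((Complex.cpow_eq_zero_iff _ _).mp h).1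
  have h2s1 : (2:ℂ)^s - 1 ≠ 0 := by
    intro h
    have heq : (2:ℂ)^s = 1 := by linear_combination h
    have : ‖(2:ℂ)^s‖ = 1 := by rw [heq]; simp
    rw [show ((2:ℂ)) = ((2:ℝ):ℂ) by norm_num,
      Complex.norm_cpow_eq_rpow_re_of_pos (by norm_num)] at this
    linarith
  have hπs : ((Real.pi:ℝ):ℂ)^s ≠ 0 := by
    intro h
    exact (Complex.ofReal_ne_zero.mpr hπ.ne') ((Complex.cpow_eq_zero_iff _ _).mp h).1
  have hval : (2 : ℂ) ^ s * (Real.pi : ℂ) ^ s / ((2 : ℂ) ^ s - 1) * ∑' i : ℕ, GG s i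
      = riemannZeta s := by
    rw [hGsum]
    field_simp
  have final := main.const_mul ((2 : ℂ) ^ s * (Real.pi : ℂ) ^ s / ((2 : ℂ) ^ s - 1))
  rw [hval] at final
  refine Tendsto.congr (fun n => ?_) final
  congr 1
  rw [tsum_eq_sum (s := Finset.Icc 1 (2^(n-2))) (f := fun i => FF s n i)
    (fun i hi => if_neg hi)]
  exact Finset.sum_congr rfl fun i hi => if_pos hi
end

section
/- For integers n ≥ 2, ∑_{j=1}^{2^{n-2}} 1/sin²((2j−1)π/2^n) = 2^{2n-2}/2 = 2^{2n-3}. -/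
open Real Finset

lemma csc_sq_add (θ : ℝ) (h1 : Real.sin θ ≠ 0) (h2 : Real.cos θ ≠ 0) :
    1 / Real.sin θ ^ 2 + 1 / Real.cos θ ^ 2 = 4 / Real.sin (2 * θ) ^ 2 := by
  rw [Real.sin_two_mul]
  have h := Real.sin_sq_add_cos_sq θ
  field_simp
  nlinarith [h]

lemma angle_mem (m j : ℕ) (hj1 : 0 < j) (hj2 : j ≤ 2 ^ m) :
    0 < ((2 * j - 1 : ℕ) : ℝ) * π / 2 ^ (m + 2) ∧
    ((2 * j - 1 : ℕ) : ℝ) * π / 2 ^ (m + 2) < π / 2 := by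
  have hpi := Real.pi_pos
  have h1 : (1 : ℕ) ≤ 2 * j - 1 := by omega
  have h2 : (2 * j - 1 : ℕ) < 2 ^ (m + 1) := by
    have : 2 * j ≤ 2 ^ (m + 1) := by
      have := Nat.mul_le_mul_left 2 hj2
      simpa [pow_succ, mul_comm] using this
    omega
  constructor
  · apply div_pos
    · apply mul_pos _ hpi
      exact_mod_cast Nat.lt_of_lt_of_le Nat.zero_lt_one h1
    · positivity
  · rw [div_lt_div_iff₀ (by positivity) two_pos]
    have : ((2 * j - 1 : ℕ) : ℝ) < 2 ^ (m + 1) := by exact_mod_cast h2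
    calc ((2 * j - 1 : ℕ) : ℝ) * π * 2 < 2 ^ (m + 1) * π * 2 := by nlinarith
      _ = π * 2 ^ (m + 2) := by ring

lemma aux (m : ℕ) :
    ∑ j ∈ Finset.Icc 1 (2 ^ m),
      1 / (Real.sin (((2 * j - 1 : ℕ) : ℝ) * π / 2 ^ (m + 2))) ^ 2
    = (2 : ℝ) ^ (2 * m + 1) := by
  induction m with
  | zero =>
      simp only [pow_zero, Finset.Icc_self, Finset.sum_singleton]
      norm_num
      rw [div_pow, Real.sq_sqrt (by norm_num)]
      norm_num
  | succ m ih =>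
      have hIcc : ∀ N : ℕ, Finset.Icc 1 N = Finset.Ioc 0 N := fun N => by
        rw [← Finset.Icc_add_one_left_eq_Ioc, zero_add]
      rw [hIcc]
      have hle1 : (0:ℕ) ≤ 2 ^ m := Nat.zero_le _
      have hle2 : (2:ℕ) ^ m ≤ 2 ^ (m + 1) := Nat.pow_le_pow_right (by norm_num) (by omega)
      rw [← Finset.sum_Ioc_consecutive _ hle1 hle2]
      have hrefl : ∑ j ∈ Finset.Ioc (2 ^ m) (2 ^ (m + 1)),
          1 / (Real.sin (((2 * j - 1 : ℕ) : ℝ) * π / 2 ^ (m + 1 + 2))) ^ 2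
          = ∑ j ∈ Finset.Ioc 0 (2 ^ m),
          1 / (Real.cos (((2 * j - 1 : ℕ) : ℝ) * π / 2 ^ (m + 1 + 2))) ^ 2 := by
        apply Finset.sum_nbij' (fun j => 2 ^ (m + 1) + 1 - j) (fun j => 2 ^ (m + 1) + 1 - j)
        · intro a ha
          simp only [Finset.mem_Ioc] at ha ⊢
          omega
        · intro a ha
          simp only [Finset.mem_Ioc] at ha ⊢
          omega
        · intro a ha
          simp only [Finset.mem_Ioc] at ha
          omega
        · intro a ha
          simp only [Finset.mem_Ioc] at ha
          omega
        · intro a ha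
          simp only [Finset.mem_Ioc] at ha
          congr 1
          have hnat : 2 * (2 ^ (m + 1) + 1 - a) - 1 = 2 ^ (m + 2) + 1 - 2 * a := by
            have : 2 ^ (m + 2) = 2 * 2 ^ (m + 1) := by ring
            omega
          rw [hnat]
          have hcast : ((2 ^ (m + 2) + 1 - 2 * a : ℕ) : ℝ) = 2 ^ (m + 2) + 1 - 2 * a := by
            have h2a : 2 * a ≤ 2 ^ (m + 2) := by
              have : 2 ^ (m + 2) = 2 * 2 ^ (m + 1) := by ring
              omega
            push_cast [Nat.cast_sub (by omega : 2 * a ≤ 2 ^ (m+2) + 1)]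
            ring
          rw [hcast, ← Real.sin_pi_div_two_sub]
          congr 1
          have hc : ((2 * a - 1 : ℕ) : ℝ) = 2 * a - 1 := by
            push_cast [Nat.cast_sub (by omega : 1 ≤ 2 * a)]
            ring
          rw [hc]
          have h2 : (2:ℝ) ^ (m + 1 + 2) = 2 * 2 ^ (m + 2) := by ring
          field_simp
          ring
      rw [hrefl, ← Finset.sum_add_distrib]
      have key : ∀ j ∈ Finset.Ioc 0 (2 ^ m),
          1 / (Real.sin (((2 * j - 1 : ℕ) : ℝ) * π / 2 ^ (m + 1 + 2))) ^ 2 +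
          1 / (Real.cos (((2 * j - 1 : ℕ) : ℝ) * π / 2 ^ (m + 1 + 2))) ^ 2
          = 4 * (1 / (Real.sin (((2 * j - 1 : ℕ) : ℝ) * π / 2 ^ (m + 2))) ^ 2) := by
        intro j hj
        simp only [Finset.mem_Ioc] at hj
        obtain ⟨h0, hlt⟩ := angle_mem (m + 1) j hj.1 (le_trans hj.2 hle2)
        have hs : Real.sin (((2 * j - 1 : ℕ) : ℝ) * π / 2 ^ (m + 1 + 2)) ≠ 0 :=
          ne_of_gt (Real.sin_pos_of_pos_of_lt_pi h0 (lt_trans hlt (by linarith [Real.pi_pos])))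
        have hc : Real.cos (((2 * j - 1 : ℕ) : ℝ) * π / 2 ^ (m + 1 + 2)) ≠ 0 :=
          ne_of_gt (Real.cos_pos_of_mem_Ioo ⟨by linarith, hlt⟩)
        rw [csc_sq_add _ hs hc]
        have : 2 * (((2 * j - 1 : ℕ) : ℝ) * π / 2 ^ (m + 1 + 2))
            = ((2 * j - 1 : ℕ) : ℝ) * π / 2 ^ (m + 2) := by
          have h2 : (2:ℝ) ^ (m + 1 + 2) = 2 * 2 ^ (m + 2) := by ring
          rw [h2]; field_simp
        rw [this]; ring
      rw [Finset.sum_congr rfl key, ← Finset.mul_sum, ← hIcc, ih]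
      ring

theorem stmt_19 (n : ℕ) (hn : 2 ≤ n) :
    ∑ j ∈ Finset.Icc 1 (2 ^ (n - 2)),
      1 / (Real.sin (((2 * j - 1 : ℕ) : ℝ) * Real.pi / 2 ^ n)) ^ 2
    = (2 : ℝ) ^ (2 * n - 3) := by
  obtain ⟨m, rfl⟩ := Nat.exists_eq_add_of_le hn
  have h1 : 2 + m - 2 = m := by omega
  have h2 : 2 + m = m + 2 := by omega
  have h3 : 2 * (2 + m) - 3 = 2 * m + 1 := by omega
  rw [h1, h3, h2]
  exact aux m
end
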